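/- arXiv:2603.22045 — 9 statements merged into one kernel-verified Lean document; each statement's English description precedes it below -/
import Mathlib

section
/- Let 0 < r < 1/2 be real. The map t_{−r} sending an infinite binary sequence s : ℕ → {0,1} to ∑_{i≥1} s(i)·(−r)^i is strictly order-preserving from the alternate order on binary sequences to the usual order on ℝ; in particular it is injective. -/
/-- A sequence (indexed from 1) over the alphabet {0,1}. -/
def IsBinary (s : ℕ → ℤ) : Prop := ∀ i, s i = 0 ∨ s i = 1

/-- `s` is a Sturmian word of slope `θ` (floor or ceiling form). -/
def IsSturmian (θ : ℝ) (s : ℕ → ℤ) : Prop :=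
  Irrational θ ∧ θ ∈ Set.Ioo (0:ℝ) 1 ∧
    ∃ ρ : ℝ,
      (∀ n : ℕ, 1 ≤ n → s n = ⌊((n:ℝ)+1)*θ+ρ⌋ - ⌊(n:ℝ)*θ+ρ⌋) ∨
      (∀ n : ℕ, 1 ≤ n → s n = ⌈((n:ℝ)+1)*θ+ρ⌉ - ⌈(n:ℝ)*θ+ρ⌉)

/-- The characteristic Sturmian word of slope `θ`. -/
noncomputable def charWord (θ : ℝ) : ℕ → ℤ := fun n => ⌊((n:ℝ)+1)*θ⌋ - ⌊(n:ℝ)*θ⌋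

/-- `tval r s = ∑_{i ≥ 1} s i * r ^ i`. -/
noncomputable def tval (r : ℝ) (s : ℕ → ℤ) : ℝ := ∑' i : ℕ, (s (i+1) : ℝ) * r^(i+1)

/-- Equality of infinite words (positions ≥ 1). -/
def EqW (s s' : ℕ → ℤ) : Prop := ∀ i, 1 ≤ i → s i = s' i

/-- Strict lexicographic order on infinite words (positions ≥ 1). -/
def LexLt (s s' : ℕ → ℤ) : Prop :=
  ∃ n, 1 ≤ n ∧ (∀ i, 1 ≤ i → i < n → s i = s' i) ∧ s n < s' n

def LexLe (s s' : ℕ → ℤ) : Prop := LexLt s s' ∨ EqW s s'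

/-- Strict alternate order on infinite words. -/
def AltLt (s s' : ℕ → ℤ) : Prop :=
  ∃ n, 1 ≤ n ∧ (∀ i, 1 ≤ i → i < n → s i = s' i) ∧ (-1:ℤ)^n * (s' n - s n) = 1

def AltLe (s s' : ℕ → ℤ) : Prop := AltLt s s' ∨ EqW s s'

/-- The doubling map `D(w₁w₂…) = w₁w₁w₂w₂…`. -/
def Dbl (w : ℕ → ℤ) : ℕ → ℤ := fun n => w ((n+1)/2)

/-- The shift map `T(w₁w₂w₃…) = w₂w₃…`. -/
def Shf (w : ℕ → ℤ) : ℕ → ℤ := fun n => w (n+1)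

/-- The word `a^l s` : the letter `a` repeated `l` times followed by `s`. -/
def Prepend (a : ℤ) (l : ℕ) (s : ℕ → ℤ) : ℕ → ℤ := fun n => if n ≤ l then a else s (n - l)

/-- The finite word `u` followed by the infinite word `s`. -/
def Cat (u : List ℤ) (s : ℕ → ℤ) : ℕ → ℤ :=
  fun n => if n ≤ u.length then u.getD (n-1) 0 else s (n - u.length)

/-- The finite word `u` occurs as a contiguous block of `s` (at a position ≥ 1). -/
def Subword (u : List ℤ) (s : ℕ → ℤ) : Prop :=
  ∃ n, 1 ≤ n ∧ ∀ i, i < u.length → s (n + i) = u.getD i 0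

/-- `s` is aperiodic: not eventually periodic. -/
def Aperiodic (s : ℕ → ℤ) : Prop :=
  ¬ ∃ k, 1 ≤ k ∧ ∃ N, 1 ≤ N ∧ ∀ n, N ≤ n → s n = s (n + k)

/-- `w` has slope `θ`: the averages of its letters tend to `θ`. -/
def HasSlope (w : ℕ → ℤ) (θ : ℝ) : Prop :=
  Filter.Tendsto (fun n : ℕ => (∑ i ∈ Finset.Icc 1 n, (w i : ℝ)) / n)
    Filter.atTop (nhds θ)

/-- The class `S` of words of the form `0^l s` or `1^l s` with `s` Sturmian. -/
def MemS (w : ℕ → ℤ) : Prop :=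
  ∃ a l s θ, (a = (0:ℤ) ∨ a = 1) ∧ IsSturmian θ s ∧ EqW w (Prepend a l s)

/-- The class `𝒟` of words of the form `0^l (D s)` or `1^l (D s)` with `s` Sturmian. -/
def MemD (w : ℕ → ℤ) : Prop :=
  ∃ a l s θ, (a = (0:ℤ) ∨ a = 1) ∧ IsSturmian θ s ∧ EqW w (Prepend a l (Dbl s))

/-- The class `𝒫 = D(Σ^ℕ) ∪ T(D(Σ^ℕ))` with `Σ = {0,1}`. -/
def MemP (w : ℕ → ℤ) : Prop :=
  (∃ u, IsBinary u ∧ EqW w (Dbl u)) ∨ (∃ u, IsBinary u ∧ EqW w (Shf (Dbl u)))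

/-
If `s ≺_alt s'` and the two sequences first differ at `n`, then the `n`-th term of
`t_{-r}(s') - t_{-r}(s)` is `(-1)^n (s' n - s n) r^n = r^n`, all earlier terms vanish, and the
later terms are bounded in absolute value by `∑_{i>n} r^i = r^(n+1)/(1-r)`, which is `< r^n`
exactly because `r < 1/2`.
Injectivity follows since two distinct binary sequences are comparable in the alternate order.
-/

theorem tsum_pos_of_leading_term {g : ℕ → ℝ} {a r : ℝ} {k : ℕ} (ha : 0 < a) (hr0 : 0 < r)
    (hr : r < 1 / 2) (hbound : ∀ i, |g i| ≤ a * r ^ i) (hzero : ∀ i < k, g i = 0)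
    (hk : g k = a * r ^ k) : 0 < ∑' i, g i := by
  have hr1 : r < 1 := by linarith
  have hsum : Summable g :=
    .of_norm_bounded ((summable_geometric_of_lt_one hr0.le hr1).mul_left a) hbound
  have hhead : ∑ i ∈ Finset.range (k + 1), g i = a * r ^ k := by
    rw [Finset.sum_range_succ, Finset.sum_eq_zero fun i hi => hzero i (Finset.mem_range.1 hi),
      hk, zero_add]
  have htail : |∑' i, g (i + (k + 1))| ≤ a * r ^ (k + 1) * (1 - r)⁻¹ :=
    tsum_of_norm_bounded (f := fun i => g (i + (k + 1)))
      ((hasSum_geometric_of_lt_one hr0.le hr1).mul_left (a * r ^ (k + 1)))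
      fun i => (hbound (i + (k + 1))).trans_eq (by ring)
  have hsmall : a * r ^ (k + 1) * (1 - r)⁻¹ < a * r ^ k := by
    have : 0 < a * r ^ k := by positivity
    rw [← div_eq_mul_inv, div_lt_iff₀ (by linarith), pow_succ]
    nlinarith
  rw [← hsum.sum_add_tsum_nat_add (k + 1), hhead]
  linarith [neg_abs_le (∑' i, g (i + (k + 1)))]

namespace IsBinary

variable {s s' : ℕ → ℤ}

theorem abs_le_one (hs : IsBinary s) (i : ℕ) : |(s i : ℝ)| ≤ 1 := by
  rcases hs i with h | h <;> simp [h]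

theorem abs_sub_le_one (hs : IsBinary s) (hs' : IsBinary s') (i : ℕ) :
    |(s' i : ℝ) - s i| ≤ 1 := by
  rcases hs i with h | h <;> rcases hs' i with h' | h' <;> simp [h, h']

theorem summable_tval_terms (hs : IsBinary s) {x : ℝ} (hx : |x| < 1) :
    Summable fun i => (s (i + 1) : ℝ) * x ^ (i + 1) := by
  refine (summable_nat_add_iff 1).mpr
    (Summable.of_norm_bounded (f := fun i => (s i : ℝ) * x ^ i)
      (summable_geometric_of_lt_one (abs_nonneg x) hx) fun i => ?_)
  rw [Real.norm_eq_abs, abs_mul, abs_pow]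
  exact mul_le_of_le_one_left (by positivity) (hs.abs_le_one i)

theorem tval_sub_tval (hs : IsBinary s) (hs' : IsBinary s') {x : ℝ} (hx : |x| < 1) :
    tval x s' - tval x s = ∑' i, ((s' (i + 1) : ℝ) - s (i + 1)) * x ^ (i + 1) := by
  rw [tval, tval, ← (hs'.summable_tval_terms hx).tsum_sub (hs.summable_tval_terms hx)]
  simp only [sub_mul]

theorem tval_lt_of_altLt (hs : IsBinary s) (hs' : IsBinary s') {r : ℝ} (h0 : 0 < r)
    (h1 : r < 1 / 2) (h : AltLt s s') : tval (-r) s < tval (-r) s' := by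
  obtain ⟨n, hn, hpre, hsign⟩ := h
  obtain ⟨k, rfl⟩ : ∃ k, n = k + 1 := ⟨n - 1, by omega⟩
  have hx : |-r| < 1 := by rw [abs_neg, abs_of_pos h0]; linarith
  rw [← sub_pos, tval_sub_tval hs hs' hx]
  refine tsum_pos_of_leading_term (k := k) h0 h0 h1 (fun i => ?_) (fun i hi => ?_) ?_
  · rw [abs_mul, abs_pow, abs_neg, abs_of_pos h0, pow_succ']
    exact mul_le_of_le_one_left (by positivity) (hs.abs_sub_le_one hs' _)
  · simp [hpre (i + 1) (by omega) (by omega)]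
  · have hsign' : (-1 : ℝ) ^ (k + 1) * ((s' (k + 1) : ℝ) - s (k + 1)) = 1 := by
      exact_mod_cast hsign
    rw [neg_pow]
    linear_combination r ^ (k + 1) * hsign'

theorem altLt_or_eqW_or_altLt (hs : IsBinary s) (hs' : IsBinary s') :
    AltLt s s' ∨ EqW s s' ∨ AltLt s' s := by
  classical
  by_cases heq : EqW s s'
  · exact .inr (.inl heq)
  have hex : ∃ n, 1 ≤ n ∧ s n ≠ s' n := by simpa [EqW] using heq
  set n := Nat.find hex
  obtain ⟨hn, hne⟩ : 1 ≤ n ∧ s n ≠ s' n := Nat.find_spec hex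
  have hpre : ∀ i, 1 ≤ i → i < n → s i = s' i := fun i hi hlt => by
    simpa [hi] using Nat.find_min hex hlt
  have hsign : (-1 : ℤ) ^ n * (s' n - s n) = 1 ∨ (-1 : ℤ) ^ n * (s n - s' n) = 1 := by
    rcases n.even_or_odd with he | he <;> rw [he.neg_one_pow] <;>
      rcases hs n with h | h <;> rcases hs' n with h' | h' <;> omega
  rcases hsign with h | h
  · exact .inl ⟨n, hn, hpre, h⟩
  · exact .inr (.inr ⟨n, hn, fun i hi hlt => (hpre i hi hlt).symm, h⟩)

end IsBinary

theorem stmt2 (r : ℝ) (h0 : 0 < r) (h1 : r < 1/2) :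
    (∀ s s' : ℕ → ℤ, IsBinary s → IsBinary s' → AltLt s s' → tval (-r) s < tval (-r) s') ∧
    (∀ s s' : ℕ → ℤ, IsBinary s → IsBinary s' → tval (-r) s = tval (-r) s' → EqW s s') := by
  refine ⟨fun s s' hs hs' h => hs.tval_lt_of_altLt hs' h0 h1 h, fun s s' hs hs' heq => ?_⟩
  rcases hs.altLt_or_eqW_or_altLt hs' with h | h | h
  · exact absurd heq (hs.tval_lt_of_altLt hs' h0 h1 h).ne
  · exact h
  · exact absurd heq.symm (hs'.tval_lt_of_altLt hs h0 h1 h).ne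
end

section
/- Let 0 < r < 1 and let s and s' be Sturmian words over {0,1} of the same slope θ. Then |t_r(s') − t_r(s)| ≤ r. Moreover, if s ≺_lex s' strictly, then t_r(s) < t_r(s'). -/
/-!
Write `s (k + 1) = F (k + 1) - F k`, where `F k` is the floor or the ceiling of `(k + 1) θ + ρ`.
For two words of the same slope the integers `F' k - F k` differ pairwise by less than `2`, so
`F' - F = c + ε` with `ε` a binary sequence, and `s' - s` is the sequence of increments of `ε`.
Summation by parts gives `t_r(s') - t_r(s) = (1 - r) ∑_{k ≥ 1} ε k r^k - ε 0 r`, whose first term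
lies in `[0, r]`. If `s <_lex s'`, then `ε` is constant up to the first difference, where it jumps
from `0` to `1`; hence `ε 0 = 0` and the first term is positive.
-/

def IsNearLine (θ : ℝ) (F : ℕ → ℤ) : Prop :=
  ∀ j k : ℕ, |((F j - F k : ℤ) : ℝ) - ((j : ℝ) - k) * θ| < 1

lemma abs_floor_sub_floor_sub_lt_one (x y : ℝ) : |((⌊x⌋ - ⌊y⌋ : ℤ) : ℝ) - (x - y)| < 1 := by
  rw [abs_sub_lt_iff]; push_cast
  constructor <;> linarith [Int.floor_le x, Int.floor_le y, Int.lt_floor_add_one x,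
    Int.lt_floor_add_one y]

lemma abs_ceil_sub_ceil_sub_lt_one (x y : ℝ) : |((⌈x⌉ - ⌈y⌉ : ℤ) : ℝ) - (x - y)| < 1 := by
  rw [abs_sub_lt_iff]; push_cast
  constructor <;> linarith [Int.le_ceil x, Int.le_ceil y, Int.ceil_lt_add_one x,
    Int.ceil_lt_add_one y]

lemma IsSturmian.exists_isNearLine {θ : ℝ} {s : ℕ → ℤ} (hs : IsSturmian θ s) :
    ∃ F : ℕ → ℤ, IsNearLine θ F ∧ ∀ k, s (k + 1) = F (k + 1) - F k := by
  obtain ⟨-, -, ρ, h | h⟩ := hs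
  · refine ⟨fun k => ⌊((k : ℝ) + 1) * θ + ρ⌋, fun j k => ?_, fun k => ?_⟩
    · convert abs_floor_sub_floor_sub_lt_one (((j : ℝ) + 1) * θ + ρ) (((k : ℝ) + 1) * θ + ρ)
        using 2
      ring
    · simpa using h (k + 1) (by omega)
  · refine ⟨fun k => ⌈((k : ℝ) + 1) * θ + ρ⌉, fun j k => ?_, fun k => ?_⟩
    · convert abs_ceil_sub_ceil_sub_lt_one (((j : ℝ) + 1) * θ + ρ) (((k : ℝ) + 1) * θ + ρ)
        using 2
      ring
    · simpa using h (k + 1) (by omega)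

lemma IsNearLine.succ_sub_eq_zero_or_one {θ : ℝ} {F : ℕ → ℤ} (hF : IsNearLine θ F)
    (hθ : θ ∈ Set.Ioo 0 1) (k : ℕ) : F (k + 1) - F k = 0 ∨ F (k + 1) - F k = 1 := by
  have h := abs_sub_lt_iff.mp (hF (k + 1) k)
  push_cast at h
  have hlo : (-1 : ℝ) < F (k + 1) - F k := by linarith [hθ.1]
  have hhi : (F (k + 1) - F k : ℝ) < 2 := by linarith [hθ.2]
  have hlo' : -1 < F (k + 1) - F k := by exact_mod_cast hlo
  have hhi' : F (k + 1) - F k < 2 := by exact_mod_cast hhi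
  omega

lemma IsNearLine.sub_sub_sub_le_one {θ : ℝ} {F F' : ℕ → ℤ} (hF : IsNearLine θ F)
    (hF' : IsNearLine θ F') (j k : ℕ) : (F' j - F j) - (F' k - F k) ≤ 1 := by
  have h := abs_sub_lt_iff.mp (hF j k)
  have h' := abs_sub_lt_iff.mp (hF' j k)
  push_cast at h h'
  have : ((F' j - F j - (F' k - F k) : ℤ) : ℝ) < 2 := by push_cast; linarith
  have : F' j - F j - (F' k - F k) < 2 := by exact_mod_cast this
  omega

lemma exists_eq_or_eq_add_one_of_sub_le_one {G : ℕ → ℤ} (hG : ∀ j k, G j - G k ≤ 1) :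
    ∃ c, ∀ k, G k = c ∨ G k = c + 1 := by
  by_cases h : ∃ j, G j < G 0
  · obtain ⟨j, hj⟩ := h
    exact ⟨G j, fun k => by have := hG k j; have := hG 0 k; omega⟩
  · push Not at h
    exact ⟨G 0, fun k => by have := hG k 0; have := h k; omega⟩

lemma IsSturmian.exists_sub_eq_succ_sub {θ : ℝ} {s s' : ℕ → ℤ} (hs : IsSturmian θ s)
    (hs' : IsSturmian θ s') :
    ∃ ε : ℕ → ℤ, (∀ k, ε k = 0 ∨ ε k = 1) ∧ ∀ k, s' (k + 1) - s (k + 1) = ε (k + 1) - ε k := by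
  obtain ⟨F, hF, hsF⟩ := hs.exists_isNearLine
  obtain ⟨F', hF', hsF'⟩ := hs'.exists_isNearLine
  obtain ⟨c, hc⟩ := exists_eq_or_eq_add_one_of_sub_le_one (hF.sub_sub_sub_le_one hF')
  refine ⟨fun k => F' k - F k - c, fun k => ?_, fun k => ?_⟩
  · dsimp only
    rcases hc k with h | h <;> omega
  · simp only [hsF, hsF']; ring

lemma IsSturmian.eq_zero_or_one {θ : ℝ} {s : ℕ → ℤ} (hs : IsSturmian θ s) (k : ℕ) :
    s (k + 1) = 0 ∨ s (k + 1) = 1 := by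
  obtain ⟨F, hF, hsF⟩ := hs.exists_isNearLine
  rw [hsF]
  exact hF.succ_sub_eq_zero_or_one hs.2.1 k

section PowerSeries

variable {r : ℝ}

lemma summable_mul_pow_of_abs_le_one (hr0 : 0 ≤ r) (hr1 : r < 1) {a : ℕ → ℝ}
    (ha : ∀ k, |a k| ≤ 1) : Summable fun k => a k * r ^ k :=
  (summable_geometric_of_lt_one hr0 hr1).of_norm_bounded fun k => by
    rw [Real.norm_eq_abs, abs_mul, abs_of_nonneg (pow_nonneg hr0 k)]
    exact mul_le_of_le_one_left (pow_nonneg hr0 k) (ha k)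

lemma tsum_sub_mul_pow_succ {ε : ℕ → ℝ} (hε : Summable fun k => ε k * r ^ k) :
    ∑' k, (ε (k + 1) - ε k) * r ^ (k + 1) =
      (1 - r) * ∑' k, ε (k + 1) * r ^ (k + 1) - ε 0 * r := by
  have hsucc : Summable fun k => ε (k + 1) * r ^ (k + 1) := (summable_nat_add_iff 1).mpr hε
  have hshift : Summable fun k => ε k * r ^ (k + 1) := by
    simpa only [pow_succ, ← mul_assoc] using hε.mul_right r
  have hsplit : ∑' k, ε k * r ^ (k + 1) = ε 0 * r + r * ∑' k, ε (k + 1) * r ^ (k + 1) := by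
    rw [hshift.tsum_eq_zero_add, ← tsum_mul_left]
    congr 1
    · ring
    · exact tsum_congr fun k => by ring
  simp only [sub_mul]
  rw [hsucc.tsum_sub hshift, hsplit]
  ring

lemma summable_mul_pow_succ_of_mem_Icc (hr0 : 0 ≤ r) (hr1 : r < 1) {a : ℕ → ℝ}
    (ha0 : ∀ k, 0 ≤ a k) (ha1 : ∀ k, a k ≤ 1) : Summable fun k => a k * r ^ (k + 1) := by
  simpa only [pow_succ, ← mul_assoc] using (summable_mul_pow_of_abs_le_one hr0 hr1 fun k =>
    abs_le.mpr ⟨by linarith [ha0 k], ha1 k⟩).mul_right r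

lemma one_sub_mul_tsum_mul_pow_succ_le (hr0 : 0 ≤ r) (hr1 : r < 1) {a : ℕ → ℝ}
    (ha0 : ∀ k, 0 ≤ a k) (ha1 : ∀ k, a k ≤ 1) :
    (1 - r) * ∑' k, a k * r ^ (k + 1) ≤ r := by
  have hgeom : ∑' k, r ^ (k + 1) = r * (1 - r)⁻¹ := by
    simp only [pow_succ', tsum_mul_left, tsum_geometric_of_lt_one hr0 hr1]
  have hle : ∑' k, a k * r ^ (k + 1) ≤ ∑' k, r ^ (k + 1) :=
    (summable_mul_pow_succ_of_mem_Icc hr0 hr1 ha0 ha1).tsum_le_tsum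
      (fun k => mul_le_of_le_one_left (pow_nonneg hr0 _) (ha1 k))
      ((summable_nat_add_iff 1).mpr (summable_geometric_of_lt_one hr0 hr1))
  calc (1 - r) * ∑' k, a k * r ^ (k + 1) ≤ (1 - r) * (r * (1 - r)⁻¹) := by
        rw [← hgeom]; exact mul_le_mul_of_nonneg_left hle (by linarith)
    _ = r := by field_simp [show (1 - r) ≠ 0 by linarith]

end PowerSeries

lemma eq_zero_and_exists_eq_one_of_lexLt {s s' ε : ℕ → ℤ} (hε : ∀ k, ε k = 0 ∨ ε k = 1)
    (hd : ∀ k, s' (k + 1) - s (k + 1) = ε (k + 1) - ε k) (hlt : LexLt s s') :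
    ε 0 = 0 ∧ ∃ m, ε (m + 1) = 1 := by
  obtain ⟨n, hn, hagree, hlt⟩ := hlt
  obtain ⟨m, rfl⟩ : ∃ m, n = m + 1 := ⟨n - 1, by omega⟩
  have hconst : ∀ j ≤ m, ε j = ε 0 := by
    intro j hj
    induction j with
    | zero => rfl
    | succ j ih =>
      have := hd j
      have := hagree (j + 1) (by omega) (by omega)
      have := ih (by omega)
      omega
  have hstep := hd m
  have hm := hconst m le_rfl
  have : ε m = 0 ∧ ε (m + 1) = 1 := by
    rcases hε m with h | h <;> rcases hε (m + 1) with h' | h' <;> omega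
  exact ⟨by omega, m, this.2⟩

lemma summable_tval_of_isSturmian {r θ : ℝ} (h0 : 0 ≤ r) (h1 : r < 1) {s : ℕ → ℤ}
    (hs : IsSturmian θ s) : Summable fun k => (s (k + 1) : ℝ) * r ^ (k + 1) :=
  summable_mul_pow_succ_of_mem_Icc h0 h1
    (fun k => by rcases hs.eq_zero_or_one k with h | h <;> simp [h])
    (fun k => by rcases hs.eq_zero_or_one k with h | h <;> simp [h])

lemma tval_sub_tval_eq {r θ : ℝ} (h0 : 0 ≤ r) (h1 : r < 1) {s s' : ℕ → ℤ} (hs : IsSturmian θ s)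
    (hs' : IsSturmian θ s') {ε : ℕ → ℤ} (hε0 : ∀ k, (0 : ℝ) ≤ ε k) (hε1 : ∀ k, (ε k : ℝ) ≤ 1)
    (hd : ∀ k, s' (k + 1) - s (k + 1) = ε (k + 1) - ε k) :
    tval r s' - tval r s = (1 - r) * ∑' k, (ε (k + 1) : ℝ) * r ^ (k + 1) - ε 0 * r := by
  rw [tval, tval, ← (summable_tval_of_isSturmian h0 h1 hs').tsum_sub
    (summable_tval_of_isSturmian h0 h1 hs), ← tsum_sub_mul_pow_succ
    (summable_mul_pow_of_abs_le_one h0 h1 fun k => abs_le.mpr ⟨by linarith [hε0 k], hε1 k⟩)]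
  refine tsum_congr fun k => ?_
  have h := congrArg (fun x : ℤ => (x : ℝ)) (hd k)
  push_cast at h
  rw [← sub_mul, h]

theorem stmt3 (r θ : ℝ) (h0 : 0 < r) (h1 : r < 1) (s s' : ℕ → ℤ)
    (hs : IsSturmian θ s) (hs' : IsSturmian θ s') :
    |tval r s' - tval r s| ≤ r ∧ (LexLt s s' → tval r s < tval r s') := by
  obtain ⟨ε, hε, hd⟩ := hs.exists_sub_eq_succ_sub hs'
  have hε0 : ∀ k, (0 : ℝ) ≤ ε k := fun k => by rcases hε k with h | h <;> simp [h]
  have hε1 : ∀ k, (ε k : ℝ) ≤ 1 := fun k => by rcases hε k with h | h <;> simp [h]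
  have hdiff := tval_sub_tval_eq h0.le h1 hs hs' hε0 hε1 hd
  set X := ∑' k, (ε (k + 1) : ℝ) * r ^ (k + 1)
  have hX0 : 0 ≤ (1 - r) * X :=
    mul_nonneg (sub_nonneg.mpr h1.le)
      (tsum_nonneg fun k => mul_nonneg (hε0 _) (pow_nonneg h0.le _))
  have hXr : (1 - r) * X ≤ r :=
    one_sub_mul_tsum_mul_pow_succ_le h0.le h1 (fun k => hε0 (k + 1)) (fun k => hε1 (k + 1))
  refine ⟨?_, fun hlex => ?_⟩
  · have hle := mul_le_of_le_one_left h0.le (hε1 0)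
    have hnonneg := mul_nonneg (hε0 0) h0.le
    rw [hdiff, abs_le]
    constructor <;> linarith
  · obtain ⟨hzero, m, hm⟩ := eq_zero_and_exists_eq_one_of_lexLt hε hd hlex
    have hXpos : 0 < X :=
      (summable_mul_pow_succ_of_mem_Icc h0.le h1 (fun k => hε0 (k + 1)) (fun k => hε1 (k + 1))).tsum_pos
        (fun k => mul_nonneg (hε0 _) (pow_nonneg h0.le _)) m (by simp [hm, h0])
    rw [← sub_pos, hdiff, hzero, Int.cast_zero, zero_mul, sub_zero]
    exact mul_pos (sub_pos.mpr h1) hXpos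
end

section
/- Let s and s' be Sturmian words over {0,1} of the same slope. Then there is no finite binary word u such that 0u0 is a (contiguous) subword of s and 1u1 is a subword of s'. -/
/-!
Summing `s m = ⌊(m+1)θ+ρ⌋ - ⌊mθ+ρ⌋` over a window of length `L` telescopes to
`⌊x + Lθ⌋ - ⌊x⌋`, which differs from `Lθ` by less than `1`; likewise for ceilings. So the
number of `1`s in any two factors of the same length of Sturmian words of slope `θ` differs by
at most `1`, whereas `0u0` and `1u1` differ by `2`.
-/

open Finset

lemma abs_floor_add_sub_floor_sub_lt_one (x y : ℝ) :
    |((⌊x + y⌋ - ⌊x⌋ : ℤ) : ℝ) - y| < 1 := by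
  have key : ((⌊x + y⌋ - ⌊x⌋ : ℤ) : ℝ) - y = Int.fract x - Int.fract (x + y) := by
    simp only [Int.fract]; push_cast; ring
  rw [key]
  exact abs_sub_lt_of_nonneg_of_lt (Int.fract_nonneg _) (Int.fract_lt_one _)
    (Int.fract_nonneg _) (Int.fract_lt_one _)

lemma abs_ceil_add_sub_ceil_sub_lt_one (x y : ℝ) :
    |((⌈x + y⌉ - ⌈x⌉ : ℤ) : ℝ) - y| < 1 := by
  have key : ((⌈x + y⌉ - ⌈x⌉ : ℤ) : ℝ) - y = (⌈x + y⌉ - (x + y)) - (⌈x⌉ - x) := by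
    push_cast; ring
  rw [key]
  exact abs_sub_lt_of_nonneg_of_lt (by linarith [Int.le_ceil (x + y)])
    (by linarith [Int.ceil_lt_add_one (x + y)]) (by linarith [Int.le_ceil x])
    (by linarith [Int.ceil_lt_add_one x])

lemma sum_range_eq_sub_of_eq_sub {s F : ℕ → ℤ} {n : ℕ}
    (h : ∀ m, n ≤ m → s m = F (m + 1) - F m) (L : ℕ) :
    ∑ i ∈ range L, s (n + i) = F (n + L) - F n := by
  calc ∑ i ∈ range L, s (n + i) = ∑ i ∈ range L, (F (n + (i + 1)) - F (n + i)) :=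
        sum_congr rfl fun i _ => h (n + i) (by omega)
    _ = F (n + L) - F n := by simpa using sum_range_sub (fun i => F (n + i)) L

lemma abs_sum_range_sub_lt_one_of_rounding {G : ℝ → ℤ}
    (hG : ∀ x y, |((G (x + y) - G x : ℤ) : ℝ) - y| < 1) {θ ρ : ℝ} {s : ℕ → ℤ}
    (hs : ∀ m : ℕ, 1 ≤ m → s m = G (((m : ℝ) + 1) * θ + ρ) - G ((m : ℝ) * θ + ρ))
    {n : ℕ} (hn : 1 ≤ n) (L : ℕ) :
    |((∑ i ∈ range L, s (n + i) : ℤ) : ℝ) - L * θ| < 1 := by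
  have telescope := sum_range_eq_sub_of_eq_sub (s := s) (n := n)
    (F := fun k : ℕ => G (k * θ + ρ)) (fun m hm => by rw [hs m (by omega)]; push_cast; rfl) L
  rw [telescope]
  have shift : ((n + L : ℕ) : ℝ) * θ + ρ = (n * θ + ρ) + L * θ := by push_cast; ring
  simpa only [shift] using hG (n * θ + ρ) (L * θ)

lemma IsSturmian.abs_sum_range_sub_lt_one {θ : ℝ} {s : ℕ → ℤ} (hs : IsSturmian θ s)
    {n : ℕ} (hn : 1 ≤ n) (L : ℕ) :
    |((∑ i ∈ range L, s (n + i) : ℤ) : ℝ) - L * θ| < 1 := by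
  obtain ⟨-, -, ρ, hfloor | hceil⟩ := hs
  · exact abs_sum_range_sub_lt_one_of_rounding abs_floor_add_sub_floor_sub_lt_one hfloor hn L
  · exact abs_sum_range_sub_lt_one_of_rounding abs_ceil_add_sub_ceil_sub_lt_one hceil hn L

lemma sum_range_getD_eq_sum (w : List ℤ) : ∑ i ∈ range w.length, w.getD i 0 = w.sum := by
  induction w with
  | nil => simp
  | cons a t ih =>
    rw [List.length_cons, sum_range_succ', List.sum_cons, ← ih]
    simp only [List.getD_cons_succ, List.getD_cons_zero, add_comm]

lemma IsSturmian.abs_sum_sub_lt_one_of_subword {θ : ℝ} {s : ℕ → ℤ} (hs : IsSturmian θ s)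
    {w : List ℤ} (hw : Subword w s) : |(w.sum : ℝ) - w.length * θ| < 1 := by
  obtain ⟨n, hn, hocc⟩ := hw
  have hsum : ∑ i ∈ range w.length, s (n + i) = w.sum := by
    rw [← sum_range_getD_eq_sum]
    exact sum_congr rfl fun i hi => hocc i (mem_range.mp hi)
  simpa only [hsum] using hs.abs_sum_range_sub_lt_one hn w.length

theorem stmt4 (θ : ℝ) (s s' : ℕ → ℤ) (hs : IsSturmian θ s) (hs' : IsSturmian θ s') :
    ¬ ∃ u : List ℤ, Subword (0 :: (u ++ [0])) s ∧ Subword (1 :: (u ++ [1])) s' := by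
  rintro ⟨u, h0, h1⟩
  have b0 := hs.abs_sum_sub_lt_one_of_subword h0
  have b1 := hs'.abs_sum_sub_lt_one_of_subword h1
  simp only [List.sum_cons, List.sum_append, List.length_cons, List.length_append,
    abs_lt] at b0 b1
  push_cast at b0 b1
  linarith [b0.1, b1.2]
end

section
/- Let w be an aperiodic binary sequence that belongs to the class S, i.e., w = a^l s where a ∈ {0,1}, l ≥ 0, and s is a Sturmian word. Then there does not exist a finite binary word u such that both 01u1 and 10u0 are subwords of w. -/
/-!
Sturmian words are balanced: a mechanical word `⌊(n+1)θ+ρ⌋ - ⌊nθ+ρ⌋` (or its ceiling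
variant) has factor sums telescoping to `⌊(p+m)θ+ρ⌋ - ⌊pθ+ρ⌋`, which takes only the two
values `⌊mθ⌋` and `⌊mθ⌋ + 1`. Prepending `a^l` cannot create the factors `1u1` and `0u0`
except inside the Sturmian part, since `01` and `10` each contain a letter different from `a`.
But the letters of `1u1` and `0u0` sum to values that differ by `2`.
-/

open Finset

def IsBalanced (s : ℕ → ℤ) : Prop :=
  ∀ m p q, 1 ≤ p → 1 ≤ q → ∑ i ∈ range m, s (p + i) ≤ ∑ i ∈ range m, s (q + i) + 1

lemma List.sum_range_getD (L : List ℤ) : ∑ i ∈ Finset.range L.length, L.getD i 0 = L.sum := by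
  induction L with
  | nil => simp
  | cons a t ih =>
    rw [List.length_cons, Finset.sum_range_succ']
    simp only [List.getD_cons_succ, List.getD_cons_zero, ih, List.sum_cons, add_comm]

lemma Int.floor_add_sub_floor_mem (x y : ℝ) : ⌊x + y⌋ - ⌊x⌋ ∈ Set.Icc ⌊y⌋ (⌊y⌋ + 1) := by
  have := Int.le_floor_add x y
  have := Int.le_floor_add_floor x y
  exact ⟨by omega, by omega⟩

lemma Int.ceil_add_sub_ceil_mem (x y : ℝ) : ⌈x + y⌉ - ⌈x⌉ ∈ Set.Icc (⌈y⌉ - 1) ⌈y⌉ := by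
  have := Int.ceil_add_le x y
  have := Int.ceil_add_ceil_le x y
  exact ⟨by omega, by omega⟩

lemma isBalanced_of_eq_sub {s f : ℕ → ℤ} (hs : ∀ k, 1 ≤ k → s k = f (k + 1) - f k)
    (hf : ∀ m, ∃ c, ∀ p, f (p + m) - f p ∈ Set.Icc c (c + 1)) : IsBalanced s := by
  have telescope : ∀ m p, 1 ≤ p → ∑ i ∈ range m, s (p + i) = f (p + m) - f p := by
    intro m p hp
    rw [sum_congr rfl fun i _ => hs (p + i) (by omega)]
    exact sum_range_sub (fun i => f (p + i)) m
  intro m p q hp hq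
  obtain ⟨c, hc⟩ := hf m
  obtain ⟨hcp, hcp'⟩ := hc p
  obtain ⟨hcq, hcq'⟩ := hc q
  rw [telescope m p hp, telescope m q hq]
  omega

lemma IsSturmian.isBalanced {θ : ℝ} {s : ℕ → ℤ} (h : IsSturmian θ s) : IsBalanced s := by
  obtain ⟨-, -, ρ, hfloor | hceil⟩ := h
  · refine isBalanced_of_eq_sub (f := fun k => ⌊(k : ℝ) * θ + ρ⌋) (fun k hk => ?_)
      fun m => ⟨⌊(m : ℝ) * θ⌋, fun p => ?_⟩
    · simp only [hfloor k hk, Nat.cast_succ]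
    · convert Int.floor_add_sub_floor_mem ((p : ℝ) * θ + ρ) (m * θ) using 3
      push_cast; ring
  · refine isBalanced_of_eq_sub (f := fun k => ⌈(k : ℝ) * θ + ρ⌉) (fun k hk => ?_)
      fun m => ⟨⌈(m : ℝ) * θ⌉ - 1, fun p => ?_⟩
    · simp only [hceil k hk, Nat.cast_succ]
    · convert Int.ceil_add_sub_ceil_mem ((p : ℝ) * θ + ρ) (m * θ) using 3
      · ring
      · push_cast; ring

lemma Subword.exists_sum_eq {L : List ℤ} {s : ℕ → ℤ} (h : Subword L s) :
    ∃ p, 1 ≤ p ∧ ∑ i ∈ range L.length, s (p + i) = L.sum := by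
  obtain ⟨p, hp, hL⟩ := h
  exact ⟨p, hp, by rw [sum_congr rfl fun i hi => hL i (mem_range.1 hi), L.sum_range_getD]⟩

lemma IsBalanced.sum_le_of_subword {s : ℕ → ℤ} (hs : IsBalanced s) {L L' : List ℤ}
    (hlen : L.length = L'.length) (h : Subword L s) (h' : Subword L' s) :
    L.sum ≤ L'.sum + 1 := by
  obtain ⟨p, hp, hsum⟩ := h.exists_sum_eq
  obtain ⟨q, hq, hsum'⟩ := h'.exists_sum_eq
  rw [← hsum, ← hsum', hlen]
  exact hs _ p q hp hq

lemma Subword.of_eqW {L : List ℤ} {w w' : ℕ → ℤ} (h : Subword L w) (hw : EqW w w') :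
    Subword L w' := by
  obtain ⟨n, hn, hL⟩ := h
  exact ⟨n, hn, fun i hi => (hw (n + i) (by omega)).symm.trans (hL i hi)⟩

lemma Subword.of_cons_cons_prepend {c₀ c₁ a : ℤ} {l : ℕ} {L : List ℤ} {s : ℕ → ℤ}
    (hne : c₀ ≠ c₁) (h : Subword (c₀ :: c₁ :: L) (Prepend a l s)) : Subword (c₁ :: L) s := by
  obtain ⟨n, hn, hL⟩ := h
  have hl : l < n + 1 := by
    by_contra! hnl
    have h0 := hL 0 (by simp)
    have h1 := hL 1 (by simp)
    simp only [Prepend, if_pos (show n + 0 ≤ l by omega), if_pos (show n + 1 ≤ l by omega)] at h0 h1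
    exact hne (by simpa using h0.symm.trans h1)
  refine ⟨n + 1 - l, by omega, fun i hi => ?_⟩
  have := hL (i + 1) (by simpa using hi)
  simp only [Prepend, if_neg (show ¬ n + (i + 1) ≤ l by omega), List.getD_cons_succ] at this
  rwa [show n + (i + 1) - l = n + 1 - l + i by omega] at this

theorem stmt7_general (w : ℕ → ℤ) (hw : MemS w) :
    ¬ ∃ u : List ℤ,
        Subword (0 :: 1 :: (u ++ [1])) w ∧ Subword (1 :: 0 :: (u ++ [0])) w := by
  rintro ⟨u, h01, h10⟩
  obtain ⟨a, l, s, θ, -, hs, hws⟩ := hw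
  have h1u1 : Subword (1 :: (u ++ [1])) s := (h01.of_eqW hws).of_cons_cons_prepend (by decide)
  have h0u0 : Subword (0 :: (u ++ [0])) s := (h10.of_eqW hws).of_cons_cons_prepend (by decide)
  have hsum := hs.isBalanced.sum_le_of_subword (by simp) h1u1 h0u0
  simp only [List.sum_cons, List.sum_append] at hsum
  omega

theorem stmt7 (w : ℕ → ℤ) (hap : Aperiodic w) (hw : MemS w) :
    ¬ ∃ u : List ℤ,
        Subword (0 :: 1 :: (u ++ [1])) w ∧ Subword (1 :: 0 :: (u ++ [0])) w :=
  stmt7_general w hw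
end

section
/- Let w be an aperiodic binary sequence such that there is no finite binary word u with both 01u1 and 10u0 occurring as subwords of w. Then w ∈ S, i.e., w = 0^l s or w = 1^l s for some l ≥ 0 and some Sturmian word s. -/
/-!
Let `l` be the length of the initial run of `w` and `s n = w (n + l)` the tail after it. If `s`
were unbalanced, a shortest pair of windows whose numbers of `1`s differ by two reads `1 t 1` and
`0 t 0`. By hypothesis one of `0 1 t 1`, `1 0 t 0` does not occur in `w`, so one of the two windows
is preceded by its own first letter and can be moved one step to the left without changing its
weight. Repeating this, a window eventually starts at position `l + 1` with `w l` equal to its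
first letter `w (l + 1)`, which contradicts the choice of `l`. Hence `s` is balanced, and by
Morse–Hedlund a balanced aperiodic binary word is Sturmian: the frequency `θ` of `1` exists by
Fekete's lemma, every window of length `k` contains `⌊kθ⌋` or `⌈kθ⌉` ones, `θ` is irrational
because `s` is aperiodic, and the discrepancies `#₁(s₁ ⋯ sₙ) - nθ` lie in an interval of length
one, which yields the intercept.
-/

namespace Word

open Set

variable {s w : ℕ → ℤ}

def prefixSum (s : ℕ → ℤ) (n : ℕ) : ℤ := ∑ i ∈ Finset.range n, s (i + 1)

/-- The sum of the `k` letters at positions `n + 1, …, n + k`. -/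
def windowSum (s : ℕ → ℤ) (k n : ℕ) : ℤ := prefixSum s (n + k) - prefixSum s n

def IsBalanced (s : ℕ → ℤ) : Prop := ∀ k n m, windowSum s k n ≤ windowSum s k m + 1

lemma prefixSum_succ (s : ℕ → ℤ) (n : ℕ) : prefixSum s (n + 1) = prefixSum s n + s (n + 1) :=
  Finset.sum_range_succ _ _

@[simp] lemma windowSum_zero (s : ℕ → ℤ) (n : ℕ) : windowSum s 0 n = 0 := by
  simp [windowSum]

lemma windowSum_add (s : ℕ → ℤ) (k j n : ℕ) :
    windowSum s (k + j) n = windowSum s k n + windowSum s j (n + k) := by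
  simp only [windowSum, add_assoc]; ring

lemma windowSum_succ (s : ℕ → ℤ) (k n : ℕ) :
    windowSum s (k + 1) n = windowSum s k n + s (n + k + 1) := by
  simp only [windowSum, ← add_assoc, prefixSum_succ]; ring

lemma windowSum_succ_sub (s : ℕ → ℤ) (k n : ℕ) :
    windowSum s k (n + 1) - windowSum s k n = s (n + k + 1) - s (n + 1) := by
  simp only [windowSum, Nat.add_right_comm n 1 k, prefixSum_succ]; ring

lemma windowSum_mul (s : ℕ → ℤ) (j d a : ℕ) :
    windowSum s (j * d) a = ∑ i ∈ Finset.range j, windowSum s d (a + i * d) := by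
  induction j with
  | zero => simp
  | succ j ih => rw [Finset.sum_range_succ, ← ih, ← windowSum_add, add_mul, one_mul]

lemma windowSum_nonneg (hb : IsBinary s) (k n : ℕ) : 0 ≤ windowSum s k n := by
  induction k with
  | zero => simp
  | succ k ih => rw [windowSum_succ]; rcases hb (n + k + 1) with h | h <;> omega

lemma windowSum_le (hb : IsBinary s) (k n : ℕ) : windowSum s k n ≤ k := by
  induction k with
  | zero => simp
  | succ k ih => rw [windowSum_succ]; rcases hb (n + k + 1) with h | h <;> push_cast <;> omega

noncomputable def maxWindowSum (s : ℕ → ℤ) (k : ℕ) : ℤ := sSup (range (windowSum s k))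

section MaxWindowSum

variable (hbal : IsBalanced s)
include hbal

lemma bddAbove_range_windowSum (k : ℕ) : BddAbove (range (windowSum s k)) :=
  ⟨windowSum s k 0 + 1, by rintro _ ⟨n, rfl⟩; exact hbal k n 0⟩

lemma windowSum_le_maxWindowSum (k n : ℕ) : windowSum s k n ≤ maxWindowSum s k :=
  le_csSup (bddAbove_range_windowSum hbal k) ⟨n, rfl⟩

lemma exists_windowSum_eq_maxWindowSum (k : ℕ) : ∃ n, windowSum s k n = maxWindowSum s k :=
  Int.csSup_mem (range_nonempty _) (bddAbove_range_windowSum hbal k)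

lemma maxWindowSum_sub_one_le (k n : ℕ) : maxWindowSum s k - 1 ≤ windowSum s k n := by
  obtain ⟨n₀, hn₀⟩ := exists_windowSum_eq_maxWindowSum hbal k
  linarith [hbal k n₀ n]

lemma maxWindowSum_add_le (k j : ℕ) :
    maxWindowSum s (k + j) ≤ maxWindowSum s k + maxWindowSum s j := by
  obtain ⟨n₀, hn₀⟩ := exists_windowSum_eq_maxWindowSum hbal (k + j)
  rw [← hn₀, windowSum_add]
  exact add_le_add (windowSum_le_maxWindowSum hbal k n₀) (windowSum_le_maxWindowSum hbal j _)

lemma le_maxWindowSum_add (k j : ℕ) :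
    maxWindowSum s k + maxWindowSum s j ≤ maxWindowSum s (k + j) + 1 := by
  obtain ⟨n₀, hn₀⟩ := exists_windowSum_eq_maxWindowSum hbal k
  have := windowSum_add s k j n₀
  linarith [windowSum_le_maxWindowSum hbal (k + j) n₀, maxWindowSum_sub_one_le hbal j (n₀ + k)]

end MaxWindowSum

/-- Fekete's lemma, applied to the subadditive sequences `maxWindowSum s` and
`1 - maxWindowSum s`, produces the frequency `θ` of the letter `1`. -/
theorem exists_slope (hb : IsBinary s) (hbal : IsBalanced s) :
    ∃ θ : ℝ, 0 ≤ θ ∧ θ ≤ 1 ∧ ∀ k n, |(windowSum s k n : ℝ) - k * θ| ≤ 1 := by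
  set u : ℕ → ℝ := fun k => maxWindowSum s k
  have hu_mem : ∀ k, 0 ≤ u k ∧ u k ≤ k := fun k => by
    obtain ⟨n, hn⟩ := exists_windowSum_eq_maxWindowSum hbal k
    simp only [u, ← hn]
    exact ⟨by exact_mod_cast windowSum_nonneg hb k n, by exact_mod_cast windowSum_le hb k n⟩
  have hu : Subadditive u := fun k j => by
    simp only [u]; exact_mod_cast maxWindowSum_add_le hbal k j
  have hv : Subadditive fun k => 1 - u k := fun k j => by
    have : (maxWindowSum s k + maxWindowSum s j : ℝ) ≤ maxWindowSum s (k + j) + 1 := by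
      exact_mod_cast le_maxWindowSum_add hbal k j
    simp only [u]; linarith
  have hu_bdd : BddBelow (range fun k => u k / k) :=
    ⟨0, by rintro _ ⟨k, rfl⟩; exact div_nonneg (hu_mem k).1 k.cast_nonneg⟩
  have hv_bdd : BddBelow (range fun k => (1 - u k) / k) := by
    refine ⟨-1, ?_⟩
    rintro _ ⟨k, rfl⟩
    rcases eq_or_ne k 0 with rfl | hk
    · simp
    · rw [le_div_iff₀ (by positivity)]; linarith [(hu_mem k).2]
  have hlim : hv.lim = -hu.lim := by
    refine tendsto_nhds_unique (hv.tendsto_lim hv_bdd) ?_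
    have := tendsto_one_div_atTop_nhds_zero_nat.sub (hu.tendsto_lim hu_bdd)
    simpa only [zero_sub, sub_div] using this
  refine ⟨hu.lim, ge_of_tendsto' (hu.tendsto_lim hu_bdd) fun k => ?_, ?_, fun k n => ?_⟩
  · exact div_nonneg (hu_mem k).1 k.cast_nonneg
  · simpa using (hu.lim_le_div hu_bdd one_ne_zero).trans (by simpa using (hu_mem 1).2)
  rcases eq_or_ne k 0 with rfl | hk
  · simp
  have hk' : (0 : ℝ) < k := by positivity
  have hup := hu.lim_le_div hu_bdd hk
  have hlow := hv.lim_le_div hv_bdd hk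
  rw [hlim, le_div_iff₀ hk'] at hlow
  rw [le_div_iff₀ hk'] at hup
  have h₁ : (windowSum s k n : ℝ) ≤ u k := by
    simp only [u]; exact_mod_cast windowSum_le_maxWindowSum hbal k n
  have h₂ : u k - 1 ≤ windowSum s k n := by
    simp only [u]; exact_mod_cast maxWindowSum_sub_one_le hbal k n
  rw [abs_le]; constructor <;> linarith

lemma finite_support_of_sum_progression_le_one {g : ℕ → ℤ} {d : ℕ} (hd : d ≠ 0)
    (hg : ∀ n, 0 ≤ g n) (hsum : ∀ a j, ∑ i ∈ Finset.range j, g (a + i * d) ≤ 1) :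
    {n | g n ≠ 0}.Finite := by
  refine Finite.of_injOn (f := (· % d)) (t := Iio d)
    (fun n _ => Nat.mod_lt n (Nat.pos_of_ne_zero hd)) ?_ (finite_Iio d)
  suffices ∀ a b, g a ≠ 0 → g b ≠ 0 → a % d = b % d → a < b → False by
    intro a ha b hb hab
    by_contra hne
    rcases lt_or_gt_of_ne hne with h | h
    exacts [this a b ha hb hab h, this b a hb ha hab.symm h]
  intro a b ha hb hab hlt
  obtain ⟨j, hj⟩ := (Nat.modEq_iff_dvd' hlt.le).1 hab
  have hj0 : j ≠ 0 := by rintro rfl; omega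
  have hpair : g a + g b ≤ ∑ i ∈ Finset.range (j + 1), g (a + i * d) := by
    have := Finset.sum_le_sum_of_subset_of_nonneg (f := fun i => g (a + i * d))
      (show {0, j} ⊆ Finset.range (j + 1) by intro i; simp; omega) (fun i _ _ => hg _)
    rwa [Finset.sum_pair hj0.symm, zero_mul, add_zero, mul_comm, ← hj,
      Nat.add_sub_cancel' hlt.le] at this
  have := hsum a (j + 1)
  have := hg a
  have := hg b
  omega

lemma eq_add_of_windowSum_eq {d N : ℕ} {c : ℤ} (h : ∀ n, N ≤ n → windowSum s d n = c)
    {n : ℕ} (hn : N < n) : s n = s (n + d) := by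
  obtain ⟨m, rfl⟩ : ∃ m, n = m + 1 := ⟨n - 1, by omega⟩
  have := windowSum_succ_sub s d m
  rw [h m (by omega), h (m + 1) (by omega), Nat.add_right_comm] at this
  linarith

/-- A rational slope `c / d` would force the windows of length `d` to take a single "defect"
value at most once in each residue class modulo `d`, hence eventually never. -/
theorem irrational_of_aperiodic {θ : ℝ} (hbal : IsBalanced s) (hap : Aperiodic s)
    (hθ : ∀ k n, |(windowSum s k n : ℝ) - k * θ| ≤ 1) : Irrational θ := by
  rintro ⟨x, rfl⟩
  set d := x.den
  set c := x.num
  have hxd : (x : ℝ) * d = c := by exact_mod_cast Rat.mul_den_eq_num x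
  have hblock : ∀ j a, |windowSum s (j * d) a - j * c| ≤ 1 := fun j a => by
    have h := hθ (j * d) a
    rw [Nat.cast_mul, mul_assoc, mul_comm (d : ℝ), hxd] at h
    exact_mod_cast h
  have hwin : ∀ n, |windowSum s d n - c| ≤ 1 := fun n => by simpa using hblock 1 n
  obtain ⟨ε, hε, hsign⟩ : ∃ ε : ℤ, |ε| = 1 ∧ ∀ n, 0 ≤ ε * (windowSum s d n - c) := by
    by_cases h : ∀ n, windowSum s d n ≤ c
    · exact ⟨-1, by simp, fun n => by linarith [h n]⟩
    · push Not at h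
      obtain ⟨n, hn⟩ := h
      refine ⟨1, by simp, fun m => ?_⟩
      have := hbal d n m
      have := abs_le.1 (hwin m)
      omega
  have hfin := finite_support_of_sum_progression_le_one x.den_nz hsign fun a j => calc
    ∑ i ∈ Finset.range j, ε * (windowSum s d (a + i * d) - c)
        = ε * (windowSum s (j * d) a - j * c) := by
      rw [← Finset.mul_sum, Finset.sum_sub_distrib, windowSum_mul]; simp
    _ ≤ |ε * (windowSum s (j * d) a - j * c)| := le_abs_self _
    _ ≤ 1 := by rw [abs_mul, hε, one_mul]; exact hblock j a
  obtain ⟨N, hN⟩ := hfin.bddAbove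
  have hc : ∀ n, N + 1 ≤ n → windowSum s d n = c := fun n hn => by
    by_contra hne
    have := hN (show n ∈ {n | ε * (windowSum s d n - c) ≠ 0} from
      mul_ne_zero (by rintro rfl; simp at hε) (sub_ne_zero.2 hne))
    omega
  exact hap ⟨d, x.den_pos, N + 2, by omega, fun n hn => eq_add_of_windowSum_eq hc (by omega)⟩

lemma abs_windowSum_sub_lt {θ : ℝ} (hirr : Irrational θ)
    (hθ : ∀ k n, |(windowSum s k n : ℝ) - k * θ| ≤ 1) {k : ℕ} (hk : k ≠ 0) (n : ℕ) :
    |(windowSum s k n : ℝ) - k * θ| < 1 := by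
  refine (hθ k n).lt_of_ne fun h => ?_
  have hkθ := hirr.natCast_mul hk
  rcases (abs_eq zero_le_one).1 h with h | h
  · exact hkθ.ne_int (windowSum s k n - 1) (by push_cast; linarith)
  · exact hkθ.ne_int (windowSum s k n + 1) (by push_cast; linarith)

lemma exists_floor_or_ceil_of_sub_lt_one {a : ℕ → ℝ} (h : ∀ n m, n ≠ m → a n - a m < 1) :
    ∃ ρ, (∀ n, a n ≤ ρ ∧ ρ - 1 < a n) ∨ (∀ n, ρ ≤ a n ∧ a n < ρ + 1) := by
  have hle : ∀ n m, a n ≤ a m + 1 := fun n m => by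
    rcases eq_or_ne n m with rfl | hnm
    · linarith
    · linarith [h n m hnm]
  have hbdd : BddAbove (range a) := ⟨a 0 + 1, by rintro _ ⟨n, rfl⟩; exact hle n 0⟩
  by_cases hsup : ∀ n, (⨆ m, a m) - 1 < a n
  · exact ⟨⨆ m, a m, Or.inl fun n => ⟨le_ciSup hbdd n, hsup n⟩⟩
  · push Not at hsup
    obtain ⟨m, hm⟩ := hsup
    refine ⟨a m, Or.inr fun n => ⟨by linarith [ciSup_le fun k => hle k n], ?_⟩⟩
    rcases eq_or_ne n m with rfl | hnm
    · linarith
    · linarith [h n m hnm]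

lemma isSturmian_of_prefixSum {θ ρ : ℝ} (hirr : Irrational θ) (hθ : θ ∈ Ioo (0 : ℝ) 1)
    (h : (∀ n : ℕ, ⌊n * θ + ρ⌋ = prefixSum s n) ∨ (∀ n : ℕ, ⌈n * θ + ρ⌉ = prefixSum s n)) :
    IsSturmian θ s := by
  have shift : ∀ m : ℕ, (((m + 1 : ℕ) : ℝ) + 1) * θ + (ρ - θ) = ((m + 1 : ℕ) : ℝ) * θ + ρ ∧
      ((m + 1 : ℕ) : ℝ) * θ + (ρ - θ) = (m : ℝ) * θ + ρ := fun m => by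
    constructor <;> push_cast <;> ring
  refine ⟨hirr, hθ, ρ - θ, h.imp (fun h n hn => ?_) (fun h n hn => ?_)⟩ <;>
  · obtain ⟨m, rfl⟩ : ∃ m, n = m + 1 := ⟨n - 1, by omega⟩
    rw [(shift m).1, (shift m).2, h, h, prefixSum_succ]
    ring

theorem isSturmian_of_isBalanced (hb : IsBinary s) (hap : Aperiodic s) (hbal : IsBalanced s) :
    ∃ θ, IsSturmian θ s := by
  obtain ⟨θ, hθ₀, hθ₁, hθ⟩ := exists_slope hb hbal
  have hirr := irrational_of_aperiodic hbal hap hθ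
  have hlt : ∀ n k, k ≠ 0 →
      |(prefixSum s (n + k) - (n + k : ℕ) * θ) - (prefixSum s n - n * θ)| < 1 := by
    intro n k hk
    convert abs_windowSum_sub_lt hirr hθ hk n using 2
    simp only [windowSum]; push_cast; ring
  obtain ⟨ρ, hρ⟩ := exists_floor_or_ceil_of_sub_lt_one (a := fun n => prefixSum s n - n * θ)
    fun n m hnm => by
      rcases lt_or_gt_of_ne hnm with h | h
      · obtain ⟨k, hk, rfl⟩ : ∃ k, k ≠ 0 ∧ m = n + k := ⟨m - n, by omega, by omega⟩
        linarith [(abs_lt.1 (hlt n k hk)).1]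
      · obtain ⟨k, hk, rfl⟩ : ∃ k, k ≠ 0 ∧ n = m + k := ⟨n - m, by omega, by omega⟩
        exact (abs_lt.1 (hlt m k hk)).2
  refine ⟨θ, isSturmian_of_prefixSum hirr
    ⟨hθ₀.lt_of_ne' hirr.ne_zero, hθ₁.lt_of_ne hirr.ne_one⟩ (ρ := ρ) ?_⟩
  refine hρ.imp (fun h n => Int.floor_eq_iff.2 ?_) (fun h n => Int.ceil_eq_iff.2 ?_) <;>
  · have := h n
    constructor <;> linarith

def factor (s : ℕ → ℤ) (p j : ℕ) : List ℤ := List.ofFn fun i : Fin j => s (p + i)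

lemma factor_succ (s : ℕ → ℤ) (p j : ℕ) : factor s p (j + 1) = s p :: factor s (p + 1) j := by
  simp [factor, List.ofFn_succ, Nat.add_right_comm, Nat.add_assoc]

lemma factor_succ_last (s : ℕ → ℤ) (p j : ℕ) :
    factor s p (j + 1) = factor s p j ++ [s (p + j)] := by
  rw [factor, factor, List.ofFn_succ_last]; rfl

lemma subword_factor (hp : 1 ≤ p) (j : ℕ) : Subword (factor w p j) w :=
  ⟨p, hp, fun i hi => by simp_all [factor]⟩

lemma factor_congr {p q j : ℕ} (h : ∀ i < j, s (p + i) = s (q + i)) :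
    factor s p j = factor s q j :=
  congrArg List.ofFn (funext fun i => h i i.2)

lemma factor_eq_cons_cons (s : ℕ → ℤ) (p K : ℕ) :
    factor s p (K + 3) = s p :: s (p + 1) :: (factor s (p + 2) K ++ [s (p + (K + 2))]) := by
  rw [factor_succ, factor_succ, factor_succ_last, show p + 1 + 1 + K = p + (K + 2) by omega]

lemma factor_tail (w : ℕ → ℤ) (l p j : ℕ) :
    factor (fun n => w (n + l)) p j = factor w (p + l) j := by
  simp [factor, Nat.add_right_comm]

lemma exists_minimal_unbalanced (hb : IsBinary s) (h : ¬ IsBalanced s) :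
    ∃ k, (∀ j < k, ∀ n m, windowSum s j n ≤ windowSum s j m + 1) ∧
      ∃ n m, windowSum s k n = windowSum s k m + 2 := by
  classical
  have hex : ∃ k n m, windowSum s k m + 1 < windowSum s k n := by
    simpa [IsBalanced] using h
  obtain ⟨k, ⟨n, m, hnm⟩, hmin⟩ : ∃ k, (∃ n m, windowSum s k m + 1 < windowSum s k n) ∧
      ∀ j < k, ∀ n m, windowSum s j n ≤ windowSum s j m + 1 :=
    ⟨Nat.find hex, Nat.find_spec hex,
      fun j hj n m => not_lt.1 fun h' => Nat.find_min hex hj ⟨n, m, h'⟩⟩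
  obtain ⟨K, rfl⟩ : ∃ K, k = K + 1 := Nat.exists_eq_succ_of_ne_zero (by rintro rfl; simp at hnm)
  refine ⟨K + 1, hmin, n, m, ?_⟩
  simp only [windowSum_succ] at hnm ⊢
  have := hmin K K.lt_succ_self n m
  rcases hb (n + K + 1) with h₁ | h₁ <;> rcases hb (m + K + 1) with h₂ | h₂ <;> omega

section MinimalUnbalanced

variable {k n m : ℕ} (hmin : ∀ j < k, ∀ n m, windowSum s j n ≤ windowSum s j m + 1)
  (h : windowSum s k n = windowSum s k m + 2)
include hmin h

lemma windowSum_eq_add_one_of_minimal {i : ℕ} (hi : 0 < i) (hik : i < k) :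
    windowSum s i n = windowSum s i m + 1 := by
  have hn := windowSum_add s i (k - i) n
  have hm := windowSum_add s i (k - i) m
  rw [Nat.add_sub_cancel' hik.le] at hn hm
  have := hmin i hik n m
  have := hmin (k - i) (by omega) (n + i) (m + i)
  omega

/-- The letterwise differences of the two windows are the increments of
`i ↦ windowSum s i n - windowSum s i m`, which runs `0, 1, …, 1, 2`. -/
lemma letters_of_minimal_unbalanced (hb : IsBinary s) :
    2 ≤ k ∧ s (n + 1) = 1 ∧ s (m + 1) = 0 ∧ s (n + k) = 1 ∧ s (m + k) = 0 ∧
      ∀ i, 1 < i → i < k → s (n + i) = s (m + i) := by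
  have step : ∀ i, s (n + (i + 1)) - s (m + (i + 1)) =
      (windowSum s (i + 1) n - windowSum s (i + 1) m) - (windowSum s i n - windowSum s i m) := by
    intro i; rw [windowSum_succ, windowSum_succ, add_assoc, add_assoc]; ring
  have step₀ := step 0
  simp only [windowSum_zero, zero_add] at step₀
  have hk : 2 ≤ k := by
    rcases (by omega : k = 0 ∨ k = 1 ∨ 2 ≤ k) with rfl | rfl | hk
    · simp at h
    · rcases hb (n + 1) with h₁ | h₁ <;> rcases hb (m + 1) with h₂ | h₂ <;> omega
    · exact hk
  obtain ⟨K, rfl⟩ : ∃ K, k = K + 2 := ⟨k - 2, by omega⟩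
  have first := windowSum_eq_add_one_of_minimal hmin h one_pos (by omega)
  have last := windowSum_eq_add_one_of_minimal hmin h (i := K + 1) (by omega) (by omega)
  have stepK := step (K + 1)
  simp only [show K + 1 + 1 = K + 2 from rfl] at stepK
  obtain ⟨hn₁, hm₁⟩ : s (n + 1) = 1 ∧ s (m + 1) = 0 := by
    rcases hb (n + 1) with h₁ | h₁ <;> rcases hb (m + 1) with h₂ | h₂ <;> omega
  obtain ⟨hnk, hmk⟩ : s (n + (K + 2)) = 1 ∧ s (m + (K + 2)) = 0 := by
    rcases hb (n + (K + 2)) with h₁ | h₁ <;> rcases hb (m + (K + 2)) with h₂ | h₂ <;> omega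
  refine ⟨hk, hn₁, hm₁, hnk, hmk, fun i hi hiK => ?_⟩
  obtain ⟨j, rfl⟩ : ∃ j, i = j + 1 := ⟨i - 1, by omega⟩
  have := step j
  have := windowSum_eq_add_one_of_minimal hmin h (i := j) (by omega) (by omega)
  have := windowSum_eq_add_one_of_minimal hmin h (i := j + 1) (by omega) (by omega)
  omega

end MinimalUnbalanced

lemma exists_pred_windowSum_eq {k p : ℕ} {a : ℤ} (h₀ : s 0 ≠ s 1) (hpred : s p = a)
    (hfirst : s (p + 1) = a) (hlast : s (p + k) = a) :
    ∃ p', p = p' + 1 ∧ windowSum s k p' = windowSum s k p := by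
  obtain ⟨p', rfl⟩ : ∃ p', p = p' + 1 :=
    Nat.exists_eq_succ_of_ne_zero (by rintro rfl; exact h₀ (hpred.trans hfirst.symm))
  refine ⟨p', rfl, ?_⟩
  have := windowSum_succ_sub s k p'
  rw [Nat.add_right_comm] at this
  linarith

theorem isBalanced_tail {l : ℕ} (hb : IsBinary w) (hl : 1 ≤ l) (hjump : w l ≠ w (l + 1))
    (h : ¬ ∃ u : List ℤ,
        Subword (0 :: 1 :: (u ++ [1])) w ∧ Subword (1 :: 0 :: (u ++ [0])) w) :
    IsBalanced fun n => w (n + l) := by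
  classical
  set s : ℕ → ℤ := fun n => w (n + l)
  have hbs : IsBinary s := fun n => hb (n + l)
  have hocc : ∀ p j, Subword (factor s p j) w := fun p j => by
    rw [factor_tail]; exact subword_factor (by omega) j
  by_contra hunbal
  obtain ⟨k, hmin, hex⟩ := exists_minimal_unbalanced hbs hunbal
  have hex' : ∃ N n m, n + m = N ∧ windowSum s k n = windowSum s k m + 2 :=
    let ⟨n, m, hnm⟩ := hex; ⟨_, n, m, rfl, hnm⟩
  obtain ⟨n, m, hN, hnm⟩ := Nat.find_spec hex'
  have hleast : ∀ n' m', windowSum s k n' = windowSum s k m' + 2 → n + m ≤ n' + m' :=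
    fun n' m' h' => hN ▸ Nat.find_min' hex' ⟨n', m', rfl, h'⟩
  obtain ⟨hk, hn₁, hm₁, hnk, hmk, hmid⟩ := letters_of_minimal_unbalanced hmin hnm hbs
  obtain ⟨K, rfl⟩ : ∃ K, k = K + 2 := ⟨k - 2, by omega⟩
  set t := factor s (n + 2) K
  have hn_fac : factor s n (K + 3) = s n :: 1 :: (t ++ [1]) := by
    rw [factor_eq_cons_cons, hn₁, hnk]
  have hm_fac : factor s m (K + 3) = s m :: 0 :: (t ++ [0]) := by
    rw [factor_eq_cons_cons, hm₁, hmk, factor_congr (q := n + 2) fun i hi => by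
      simpa only [Nat.add_assoc] using (hmid (2 + i) (by omega) (by omega)).symm]
  have h₀ : s 0 ≠ s 1 := by simpa [s, Nat.add_comm 1] using hjump
  rcases not_and_or.1 (not_exists.1 h t) with h01 | h10
  · have hpred : s n = 1 := (hbs n).resolve_left fun h0 => h01 (h0 ▸ hn_fac ▸ hocc n (K + 3))
    obtain ⟨n', rfl, hshift⟩ := exists_pred_windowSum_eq h₀ hpred hn₁ hnk
    have := hleast n' m (hshift ▸ hnm)
    omega
  · have hpred : s m = 0 := (hbs m).resolve_right fun h1 => h10 (h1 ▸ hm_fac ▸ hocc m (K + 3))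
    obtain ⟨m', rfl, hshift⟩ := exists_pred_windowSum_eq h₀ hpred hm₁ hmk
    have := hleast n m' (hshift ▸ hnm)
    omega

lemma exists_first_change (hap : Aperiodic w) :
    ∃ l, 1 ≤ l ∧ (∀ i, 1 ≤ i → i ≤ l → w i = w 1) ∧ w (l + 1) ≠ w 1 := by
  classical
  have hex : ∃ l, w (l + 1) ≠ w 1 := by
    by_contra hconst
    push Not at hconst
    refine hap ⟨1, le_rfl, 1, le_rfl, fun n hn => ?_⟩
    obtain ⟨j, rfl⟩ : ∃ j, n = j + 1 := ⟨n - 1, by omega⟩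
    rw [hconst j, hconst (j + 1)]
  refine ⟨Nat.find hex, Nat.one_le_iff_ne_zero.2 fun h0 => ?_, fun i hi hil => ?_,
    Nat.find_spec hex⟩
  · exact Nat.find_spec hex (by rw [h0])
  · obtain ⟨j, rfl⟩ : ∃ j, i = j + 1 := ⟨i - 1, by omega⟩
    exact not_not.1 (Nat.find_min hex (by omega))

lemma aperiodic_tail (hap : Aperiodic w) (l : ℕ) : Aperiodic fun n => w (n + l) := by
  rintro ⟨k, hk, N, hN, hper⟩
  refine hap ⟨k, hk, N + l, by omega, fun n hn => ?_⟩
  have := hper (n - l) (by omega)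
  simp only [Nat.add_right_comm _ k l, Nat.sub_add_cancel (show l ≤ n by omega)] at this
  exact this

end Word

theorem stmt8 (w : ℕ → ℤ) (hb : IsBinary w) (hap : Aperiodic w)
    (h : ¬ ∃ u : List ℤ,
        Subword (0 :: 1 :: (u ++ [1])) w ∧ Subword (1 :: 0 :: (u ++ [0])) w) :
    MemS w := by
  obtain ⟨l, hl, hprefix, hjump⟩ := Word.exists_first_change hap
  have hbal := Word.isBalanced_tail hb hl (by rwa [hprefix l hl le_rfl, ne_comm]) h
  obtain ⟨θ, hθ⟩ :=
    Word.isSturmian_of_isBalanced (fun n => hb (n + l)) (Word.aperiodic_tail hap l) hbal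
  refine ⟨w 1, l, _, θ, hb 1, hθ, fun i hi => ?_⟩
  unfold Prepend
  split_ifs with hil
  · exact hprefix i hi hil
  · simp only [Nat.sub_add_cancel (by omega : l ≤ i)]
end

section
/- Let 0 < r < 1 and let s, s' ∈ S be words of the same slope with s ≺_lex s' strictly. Then t_r(s) < t_r(s'). -/
/-!
Write `P w m` for the number of ones among the first `m` letters of `w`. For `w = aˡ u` with `u`
Sturmian of slope `θ`, the discrepancy `P w m - m θ` oscillates by less than `1` once `m ≥ l`;
in particular the slope of `w` is that of `u`. For two such words of the same slope the integer
`Δ m = P w' m - P w m` therefore drops by at most `1` beyond both prefixes. If `w ≺ w'` first differ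
at `n`, then `w ≤ w'` letterwise up to `max n l l'` (a prefix reaching beyond `n` is `0ˡ` in `w` or
`1ˡ'` in `w'`), so `Δ ≥ 0` there and `Δ ≥ 1` at its end, hence `Δ ≥ 0` everywhere. Summation by
parts gives `t_r(w') - t_r(w) = (1 - r) ∑ Δ m rᵐ`, which is positive since `Δ n = 1`.
-/

open Finset Filter

def prefixSum (w : ℕ → ℤ) (m : ℕ) : ℤ := ∑ i ∈ range m, w (i + 1)

def discrepancy (θ : ℝ) (f : ℕ → ℤ) (m : ℕ) : ℝ := f m - m * θ

def IsBalancedFrom (θ : ℝ) (l : ℕ) (f : ℕ → ℤ) : Prop :=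
  ∀ m₁ m₂, l ≤ m₁ → l ≤ m₂ → |discrepancy θ f m₁ - discrepancy θ f m₂| < 1

section Balance

lemma isBalancedFrom_floor (θ ρ : ℝ) : IsBalancedFrom θ 0 fun n => ⌊(n : ℝ) * θ + ρ⌋ := by
  intro m₁ m₂ _ _
  have h₁ := Int.floor_le ((m₁ : ℝ) * θ + ρ)
  have h₂ := Int.floor_le ((m₂ : ℝ) * θ + ρ)
  have h₁' := Int.lt_floor_add_one ((m₁ : ℝ) * θ + ρ)
  have h₂' := Int.lt_floor_add_one ((m₂ : ℝ) * θ + ρ)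
  simp only [discrepancy, abs_sub_lt_iff]
  constructor <;> linarith

lemma isBalancedFrom_ceil (θ ρ : ℝ) : IsBalancedFrom θ 0 fun n => ⌈(n : ℝ) * θ + ρ⌉ := by
  intro m₁ m₂ _ _
  have h₁ := Int.le_ceil ((m₁ : ℝ) * θ + ρ)
  have h₂ := Int.le_ceil ((m₂ : ℝ) * θ + ρ)
  have h₁' := Int.ceil_lt_add_one ((m₁ : ℝ) * θ + ρ)
  have h₂' := Int.ceil_lt_add_one ((m₂ : ℝ) * θ + ρ)
  simp only [discrepancy, abs_sub_lt_iff]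
  constructor <;> linarith

variable {θ : ℝ}

lemma IsBalancedFrom.prefixSum_of_eq_sub {s F : ℕ → ℤ} (hF : IsBalancedFrom θ 0 F)
    (hs : ∀ n, 1 ≤ n → s n = F (n + 1) - F n) : IsBalancedFrom θ 0 (prefixSum s) := by
  have hsum : ∀ m, prefixSum s m = F (m + 1) - F 1 := by
    intro m
    rw [prefixSum, sum_congr rfl fun i _ => hs (i + 1) (by omega)]
    exact sum_range_sub (fun i => F (i + 1)) m
  intro m₁ m₂ _ _
  convert hF (m₁ + 1) (m₂ + 1) (by omega) (by omega) using 2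
  simp only [discrepancy, hsum]
  push_cast
  ring

lemma IsSturmian.isBalancedFrom {s : ℕ → ℤ} (hs : IsSturmian θ s) :
    IsBalancedFrom θ 0 (prefixSum s) := by
  obtain ⟨-, -, ρ, hfloor | hceil⟩ := hs
  · exact (isBalancedFrom_floor θ ρ).prefixSum_of_eq_sub fun n hn => by
      rw [hfloor n hn]; push_cast; rfl
  · exact (isBalancedFrom_ceil θ ρ).prefixSum_of_eq_sub fun n hn => by
      rw [hceil n hn]; push_cast; rfl

lemma prefixSum_congr {w w' : ℕ → ℤ} (h : EqW w w') : prefixSum w = prefixSum w' :=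
  funext fun m => sum_congr rfl fun i _ => h (i + 1) (by omega)

lemma prefixSum_prepend (a : ℤ) (l : ℕ) (s : ℕ → ℤ) (k : ℕ) :
    prefixSum (Prepend a l s) (l + k) = a * l + prefixSum s k := by
  simp only [prefixSum, sum_range_add, Prepend]
  congr 1
  · rw [sum_congr rfl fun i hi => if_pos (by simp at hi; omega)]
    simp [mul_comm]
  · refine sum_congr rfl fun i _ => ?_
    rw [if_neg (by omega)]
    congr 1
    omega

lemma IsBalancedFrom.prepend {s w : ℕ → ℤ} {a : ℤ} {l : ℕ} (hs : IsBalancedFrom θ 0 (prefixSum s))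
    (hw : EqW w (Prepend a l s)) : IsBalancedFrom θ l (prefixSum w) := by
  intro m₁ m₂ h₁ h₂
  obtain ⟨k₁, rfl⟩ := Nat.exists_eq_add_of_le h₁
  obtain ⟨k₂, rfl⟩ := Nat.exists_eq_add_of_le h₂
  convert hs k₁ k₂ (by omega) (by omega) using 2
  simp only [discrepancy, prefixSum_congr hw, prefixSum_prepend]
  push_cast
  ring

lemma IsBalancedFrom.hasSlope {w : ℕ → ℤ} {l : ℕ} (h : IsBalancedFrom θ l (prefixSum w)) :
    HasSlope w θ := by
  set C := |discrepancy θ (prefixSum w) l| + 1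
  have hC : ∀ m, l ≤ m → |discrepancy θ (prefixSum w) m| ≤ C := fun m hm => by
    have := h m l hm le_rfl
    have := abs_sub_abs_le_abs_sub (discrepancy θ (prefixSum w) m) (discrepancy θ (prefixSum w) l)
    linarith
  rw [HasSlope, ← tendsto_sub_nhds_zero_iff]
  refine squeeze_zero_norm' ?_ (tendsto_const_div_atTop_nhds_zero_nat C)
  filter_upwards [eventually_ge_atTop (max l 1)] with m hm
  have hm0 : (0 : ℝ) < m := by exact_mod_cast (show 0 < m by omega)
  have hIcc : ∑ i ∈ Icc 1 m, (w i : ℝ) = prefixSum w m := by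
    rw [prefixSum, ← Ico_add_one_right_eq_Icc, sum_Ico_eq_sum_range]
    push_cast
    exact sum_congr rfl fun i _ => by rw [add_comm]
  rw [hIcc, show (prefixSum w m : ℝ) / m - θ = discrepancy θ (prefixSum w) m / m by
    rw [discrepancy]; field_simp, norm_div, Real.norm_eq_abs, Real.norm_of_nonneg hm0.le]
  exact div_le_div_of_nonneg_right (hC m (by omega)) hm0.le

lemma IsBalancedFrom.letter_eq_zero_or_one {w : ℕ → ℤ} {l : ℕ}
    (h : IsBalancedFrom θ l (prefixSum w)) (hθ : θ ∈ Set.Icc 0 1) {i : ℕ} (hi : l ≤ i) :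
    w (i + 1) = 0 ∨ w (i + 1) = 1 := by
  have hdiff : discrepancy θ (prefixSum w) (i + 1) - discrepancy θ (prefixSum w) i
      = w (i + 1) - θ := by
    simp only [discrepancy, prefixSum, sum_range_succ]
    push_cast
    ring
  have := abs_lt.mp (h (i + 1) i (by omega) hi)
  rw [hdiff] at this
  have hlo : (-1 : ℝ) < w (i + 1) := by linarith [hθ.1]
  have hhi : (w (i + 1) : ℝ) < 2 := by linarith [hθ.2]
  have : -1 < w (i + 1) := by exact_mod_cast hlo
  have : w (i + 1) < 2 := by exact_mod_cast hhi
  omega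

lemma IsBalancedFrom.sub_sub_sub_le_one {f g : ℕ → ℤ} {l l' : ℕ}
    (hf : IsBalancedFrom θ l f) (hg : IsBalancedFrom θ l' g) {m₁ m₂ : ℕ}
    (h₁ : max l l' ≤ m₁) (h₂ : max l l' ≤ m₂) : (g m₁ - f m₁) - (g m₂ - f m₂) ≤ 1 := by
  have hreal : (((g m₁ - f m₁) - (g m₂ - f m₂) : ℤ) : ℝ) =
      (discrepancy θ g m₁ - discrepancy θ g m₂) - (discrepancy θ f m₁ - discrepancy θ f m₂) := by
    simp only [discrepancy]
    push_cast
    ring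
  have hlt : (((g m₁ - f m₁) - (g m₂ - f m₂) : ℤ) : ℝ) < 2 := by
    rw [hreal]
    linarith [(abs_lt.mp (hg m₁ m₂ (by omega) (by omega))).2,
      (abs_lt.mp (hf m₁ m₂ (by omega) (by omega))).1]
  have : (g m₁ - f m₁) - (g m₂ - f m₂) < 2 := by exact_mod_cast hlt
  omega

end Balance

lemma EqW.apply_eq_of_le_of_prepend {w s : ℕ → ℤ} {a : ℤ} {l i : ℕ}
    (hw : EqW w (Prepend a l s)) (hi : 1 ≤ i) (hil : i ≤ l) : w i = a := by
  rw [hw i hi, Prepend, if_pos hil]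

lemma isBinary_shf_of_prepend {w s : ℕ → ℤ} {a : ℤ} {l : ℕ} {θ : ℝ} (ha : a = 0 ∨ a = 1)
    (hθ : θ ∈ Set.Icc 0 1) (hb : IsBalancedFrom θ l (prefixSum w))
    (hw : EqW w (Prepend a l s)) : IsBinary (Shf w) := by
  intro i
  by_cases hi : i + 1 ≤ l
  · rw [Shf, hw.apply_eq_of_le_of_prepend (by omega) hi]
    exact ha
  · exact hb.letter_eq_zero_or_one hθ (by omega)

lemma LexLt.exists_prefixSum_lt {w w' : ℕ → ℤ} (h : LexLt w w') :
    ∃ m, prefixSum w m < prefixSum w' m := by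
  obtain ⟨n, hn, heq, hlt⟩ := h
  obtain ⟨k, rfl⟩ := Nat.exists_eq_add_of_le' hn
  refine ⟨k + 1, ?_⟩
  rw [prefixSum, prefixSum, sum_range_succ, sum_range_succ,
    sum_congr rfl fun i hi => heq (i + 1) (by omega) (by simp at hi; omega)]
  omega

lemma prefixSum_le_prefixSum_of_lexLt {θ : ℝ} {w w' : ℕ → ℤ} {a a' : ℤ} {l l' : ℕ}
    (hw : IsBinary (Shf w)) (hw' : IsBinary (Shf w'))
    (ha : ∀ i, 1 ≤ i → i ≤ l → w i = a) (ha' : ∀ i, 1 ≤ i → i ≤ l' → w' i = a')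
    (hb : IsBalancedFrom θ l (prefixSum w)) (hb' : IsBalancedFrom θ l' (prefixSum w'))
    (hlt : LexLt w w') (m : ℕ) : prefixSum w m ≤ prefixSum w' m := by
  obtain ⟨n, hn, heq, hltn⟩ := hlt
  have hbin : ∀ i, 1 ≤ i → (w i = 0 ∨ w i = 1) ∧ (w' i = 0 ∨ w' i = 1) := fun i hi => by
    obtain ⟨j, rfl⟩ := Nat.exists_eq_add_of_le' hi
    exact ⟨hw j, hw' j⟩
  have hwn := hbin n hn
  set K := max n (max l l')
  have hle : ∀ i, 1 ≤ i → i ≤ K → w i ≤ w' i := by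
    intro i hi hiK
    have hwi := hbin i hi
    rcases lt_trichotomy i n with hin | rfl | hni
    · exact (heq i hi hin).le
    · exact hltn.le
    · rcases le_max_iff.mp ((le_max_iff.mp hiK).resolve_left (by omega)) with hil | hil
      · have := ha i hi hil
        have := ha n hn (by omega)
        omega
      · have := ha' i hi hil
        have := ha' n hn (by omega)
        omega
  have hK : prefixSum w K < prefixSum w' K :=
    sum_lt_sum (fun i hi => hle (i + 1) (by omega) (by simp at hi; omega))
      ⟨n - 1, by simp; omega, by rw [Nat.sub_add_cancel hn]; exact hltn⟩
  rcases le_total m K with hm | hm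
  · exact sum_le_sum fun i hi => hle (i + 1) (by omega) (by simp at hi; omega)
  · have := hb.sub_sub_sub_le_one hb' (show max l l' ≤ K from le_max_right _ _)
      ((le_max_right _ _).trans hm)
    omega

section Abel

variable {d : ℕ → ℝ} {C r : ℝ}

lemma summable_sum_range_mul_pow (hd : ∀ i, |d i| ≤ C) (hr0 : 0 ≤ r) (hr1 : r < 1) :
    Summable fun i => (∑ j ∈ range i, d j) * r ^ i := by
  have hgeo : Summable fun i : ℕ => C * ((i : ℝ) ^ 1 * r ^ i) :=
    (summable_pow_mul_geometric_of_norm_lt_one 1 (by rwa [Real.norm_of_nonneg hr0])).mul_left C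
  refine hgeo.of_norm_bounded fun i => ?_
  have hsum : |∑ j ∈ range i, d j| ≤ C * i := by
    calc |∑ j ∈ range i, d j| ≤ ∑ j ∈ range i, |d j| := abs_sum_le_sum_abs _ _
      _ ≤ ∑ _j ∈ range i, C := sum_le_sum fun j _ => hd j
      _ = C * i := by rw [sum_const, card_range, nsmul_eq_mul, mul_comm]
  rw [norm_mul, norm_pow, Real.norm_eq_abs, Real.norm_of_nonneg hr0, pow_one, ← mul_assoc]
  gcongr

lemma tsum_mul_pow_succ_eq_one_sub_mul (hd : ∀ i, |d i| ≤ C) (hr0 : 0 ≤ r) (hr1 : r < 1) :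
    ∑' i, d i * r ^ (i + 1) = (1 - r) * ∑' i, (∑ j ∈ range i, d j) * r ^ i := by
  set S : ℕ → ℝ := fun i => ∑ j ∈ range i, d j
  have hS : Summable fun i => S i * r ^ i := summable_sum_range_mul_pow hd hr0 hr1
  have hS₁ : Summable fun i => S (i + 1) * r ^ (i + 1) := (summable_nat_add_iff 1).mpr hS
  have hterm : ∀ i, d i * r ^ (i + 1) = S (i + 1) * r ^ (i + 1) - r * (S i * r ^ i) := by
    intro i
    simp only [S, sum_range_succ]
    ring
  rw [tsum_congr hterm, hS₁.tsum_sub (hS.mul_left r), tsum_mul_left, hS.tsum_eq_zero_add]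
  simp only [S, range_zero, sum_empty, zero_mul, zero_add]
  ring

lemma tsum_mul_pow_succ_pos (hd : ∀ i, |d i| ≤ C) (hr0 : 0 < r) (hr1 : r < 1)
    (hS : ∀ m, 0 ≤ ∑ j ∈ range m, d j) (hpos : ∃ m, 0 < ∑ j ∈ range m, d j) :
    0 < ∑' i, d i * r ^ (i + 1) := by
  obtain ⟨m, hm⟩ := hpos
  rw [tsum_mul_pow_succ_eq_one_sub_mul hd hr0.le hr1]
  refine mul_pos (by linarith) ?_
  exact (summable_sum_range_mul_pow hd hr0.le hr1).tsum_pos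
    (fun i => mul_nonneg (hS i) (pow_nonneg hr0.le i)) m (mul_pos hm (pow_pos hr0 m))

end Abel

lemma IsBinary.summable_mul_pow {u : ℕ → ℤ} (hu : IsBinary u) {r : ℝ} (hr0 : 0 ≤ r)
    (hr1 : r < 1) : Summable fun i => (u i : ℝ) * r ^ (i + 1) := by
  refine ((summable_geometric_of_lt_one hr0 hr1).mul_left r).of_norm_bounded fun i => ?_
  have hui : |(u i : ℝ)| ≤ 1 := by rcases hu i with h | h <;> simp [h]
  rw [norm_mul, norm_pow, Real.norm_eq_abs, Real.norm_of_nonneg hr0, pow_succ']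
  exact mul_le_of_le_one_left (by positivity) hui

lemma tval_lt_tval_of_prefixSum_le {r : ℝ} (h0 : 0 < r) (h1 : r < 1) {w w' : ℕ → ℤ}
    (hw : IsBinary (Shf w)) (hw' : IsBinary (Shf w'))
    (hle : ∀ m, prefixSum w m ≤ prefixSum w' m) (hlt : ∃ m, prefixSum w m < prefixSum w' m) :
    tval r w < tval r w' := by
  have hsum : ∀ m, ∑ j ∈ range m, ((w' (j + 1) : ℝ) - w (j + 1)) =
      ((prefixSum w' m - prefixSum w m : ℤ) : ℝ) := by
    intro m
    simp only [prefixSum, sum_sub_distrib, Int.cast_sub, Int.cast_sum]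
  have hd : ∀ i, |(w' (i + 1) : ℝ) - w (i + 1)| ≤ 1 := by
    intro i
    rcases hw i with h | h <;> rcases hw' i with h' | h' <;> simp only [Shf] at h h' <;>
      norm_num [h, h']
  have hs : Summable fun i => (w (i + 1) : ℝ) * r ^ (i + 1) := hw.summable_mul_pow h0.le h1
  have hs' : Summable fun i => (w' (i + 1) : ℝ) * r ^ (i + 1) := hw'.summable_mul_pow h0.le h1
  rw [← sub_pos, tval, tval, ← hs'.tsum_sub hs]
  simp only [← sub_mul]
  refine tsum_mul_pow_succ_pos hd h0 h1 (fun m => ?_) ?_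
  · rw [hsum]
    exact_mod_cast sub_nonneg.mpr (hle m)
  · obtain ⟨m, hm⟩ := hlt
    exact ⟨m, by rw [hsum]; exact_mod_cast sub_pos.mpr hm⟩

theorem stmt9 (r θ : ℝ) (h0 : 0 < r) (h1 : r < 1) (w w' : ℕ → ℤ)
    (hw : MemS w) (hw' : MemS w') (h : HasSlope w θ) (h' : HasSlope w' θ)
    (hlt : LexLt w w') : tval r w < tval r w' := by
  obtain ⟨a, l, s, θ₁, ha, hs, hew⟩ := hw
  obtain ⟨a', l', s', θ₂, ha', hs', hew'⟩ := hw'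
  have hb := hs.isBalancedFrom.prepend hew
  have hb' := hs'.isBalancedFrom.prepend hew'
  have hθ₁ : θ₁ = θ := tendsto_nhds_unique hb.hasSlope h
  have hθ₂ : θ₂ = θ := tendsto_nhds_unique hb'.hasSlope h'
  rw [hθ₁] at hs hb
  rw [hθ₂] at hb'
  have hθ : θ ∈ Set.Icc 0 1 := Set.Ioo_subset_Icc_self hs.2.1
  have hbin := isBinary_shf_of_prepend ha hθ hb hew
  have hbin' := isBinary_shf_of_prepend ha' hθ hb' hew'
  refine tval_lt_tval_of_prefixSum_le h0 h1 hbin hbin' ?_ hlt.exists_prefixSum_lt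
  exact prefixSum_le_prefixSum_of_lexLt hbin hbin' (fun i => hew.apply_eq_of_le_of_prepend)
    (fun i => hew'.apply_eq_of_le_of_prepend) hb hb' hlt
end

section
/- Let D be the doubling map on infinite binary words, D(w₁w₂w₃…) = w₁w₁w₂w₂w₃w₃…, and T the shift. Define D-class 𝒟 as the set of words of the form 0^l(Ds) or 1^l(Ds) with l ≥ 0 and s Sturmian. Then 𝒟 equals the disjoint union of D(S) and T(D(S)), where S is the set of words 0^l s or 1^l s with s Sturmian. -/
/-!
Doubling sends `a^l s` to `a^{2l} (D s)` and `T D (a^{l+1} s) = a^{2l+1} (D s)`, so the parity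
of `l` decides between `D(S)` and `T(D(S))`; a word of `S` with `l = 0` can be rewritten with
`l = 1`, because `s = s₁ (T s)` and `T s` is again Sturmian.

If `D v = T (D v')`, then `v₁ = v₂ = v₃ = …`. No word of `S` is constant: a Sturmian word is
the difference sequence of some `f` with `f n = nθ + ρ + O(1)`, so a constant value `c` would
force `n (c - θ) = O(1)`, i.e. `θ = c`, contradicting irrationality.
-/

namespace EqW

theorem refl (s : ℕ → ℤ) : EqW s s := fun _ _ => rfl

theorem symm {s s' : ℕ → ℤ} (h : EqW s s') : EqW s' s := fun i hi => (h i hi).symm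

theorem trans {s s' s'' : ℕ → ℤ} (h : EqW s s') (h' : EqW s' s'') : EqW s s'' :=
  fun i hi => (h i hi).trans (h' i hi)

theorem dbl {s s' : ℕ → ℤ} (h : EqW s s') : EqW (Dbl s) (Dbl s') :=
  fun i hi => h ((i + 1) / 2) (by omega)

theorem shf {s s' : ℕ → ℤ} (h : EqW s s') : EqW (Shf s) (Shf s') :=
  fun i _ => h (i + 1) (by omega)

end EqW

theorem dbl_prepend (a : ℤ) (l : ℕ) (s : ℕ → ℤ) :
    Dbl (Prepend a l s) = Prepend a (2 * l) (Dbl s) := by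
  funext n
  simp only [Dbl, Prepend]
  split_ifs <;> first | rfl | omega | (congr 1; omega)

theorem shf_dbl_prepend_succ (a : ℤ) (l : ℕ) (s : ℕ → ℤ) :
    Shf (Dbl (Prepend a (l + 1) s)) = Prepend a (2 * l + 1) (Dbl s) := by
  funext n
  simp only [Shf, Dbl, Prepend]
  split_ifs <;> first | rfl | omega | (congr 1; omega)

theorem prepend_add (a : ℤ) (l : ℕ) (s : ℕ → ℤ) {n : ℕ} (hn : 1 ≤ n) :
    Prepend a l s (n + l) = s n := by
  simp only [Prepend, if_neg (show ¬n + l ≤ l by omega), Nat.add_sub_cancel]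

theorem eqW_prepend_one_shf (s : ℕ → ℤ) : EqW s (Prepend (s 1) 1 (Shf s)) := by
  intro n hn
  simp only [Prepend, Shf]
  split_ifs with h
  · rw [show n = 1 by omega]
  · congr 1; omega

/-- Positions `2k` and `2k + 1` give `v k = v' (k + 1) = v (k + 1)`. -/
theorem eq_one_of_eqW_dbl_shf_dbl {v v' : ℕ → ℤ} (h : EqW (Dbl v) (Shf (Dbl v'))) :
    ∀ n, 1 ≤ n → v n = v 1 := by
  have step : ∀ k, 1 ≤ k → v (k + 1) = v k := by
    intro k hk
    have heven := h (2 * k) (by omega)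
    have hodd := h (2 * k + 1) (by omega)
    simp only [Dbl, Shf] at heven hodd
    rw [show (2 * k + 1) / 2 = k by omega, show (2 * k + 1 + 1) / 2 = k + 1 by omega] at heven
    rw [show (2 * k + 1 + 1) / 2 = k + 1 by omega,
      show (2 * k + 1 + 1 + 1) / 2 = k + 1 by omega] at hodd
    rw [hodd, heven]
  intro n hn
  induction n, hn using Nat.le_induction with
  | base => rfl
  | succ k hk ih => rw [step k hk, ih]

theorem eq_zero_of_forall_abs_natCast_mul_le {x C : ℝ} (h : ∀ n : ℕ, |(n : ℝ) * x| ≤ C) :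
    x = 0 := by
  by_contra hx
  have hpos : 0 < |x| := abs_pos.mpr hx
  obtain ⟨n, hn⟩ := exists_nat_gt (C / |x|)
  have := h n
  rw [abs_mul, Nat.abs_cast, ← not_lt] at this
  exact this ((div_lt_iff₀ hpos).mp hn)

theorem not_const_of_eq_sub_of_abs_sub_le {θ ρ : ℝ} (hθ : Irrational θ) {f : ℕ → ℤ}
    (hf : ∀ n : ℕ, |(f n : ℝ) - (n * θ + ρ)| ≤ 1) {s : ℕ → ℤ}
    (hs : ∀ n, 1 ≤ n → s n = f (n + 1) - f n) : ¬ ∀ n, 1 ≤ n → s n = s 1 := by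
  intro hconst
  have hlin : ∀ n : ℕ, f (n + 1) = f 1 + s 1 * n := by
    intro n
    induction n with
    | zero => simp
    | succ k ih =>
      have := hs (k + 1) (by omega)
      rw [hconst (k + 1) (by omega)] at this
      push_cast
      linarith
  have hbound : ∀ n : ℕ, |(n : ℝ) * ((s 1 : ℝ) - θ)| ≤ 2 := by
    intro n
    have h₁ := abs_le.mp (hf (n + 1))
    have h₀ := abs_le.mp (hf 1)
    rw [hlin n] at h₁
    push_cast at h₁ h₀
    exact abs_le.mpr ⟨by linarith, by linarith⟩
  exact hθ.ne_int (s 1) (sub_eq_zero.mp (eq_zero_of_forall_abs_natCast_mul_le hbound)).symm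

theorem Int.floor_add_sub_floor_eq_zero_or_eq_one {x θ : ℝ} (h₀ : 0 ≤ θ) (h₁ : θ ≤ 1) :
    ⌊x + θ⌋ - ⌊x⌋ = 0 ∨ ⌊x + θ⌋ - ⌊x⌋ = 1 := by
  have hlo : ⌊x⌋ ≤ ⌊x + θ⌋ := Int.floor_mono (by linarith)
  have hhi : ⌊x + θ⌋ ≤ ⌊x⌋ + 1 := by
    rw [← Int.floor_add_one]; exact Int.floor_mono (by linarith)
  omega

theorem Int.ceil_add_sub_ceil_eq_zero_or_eq_one {x θ : ℝ} (h₀ : 0 ≤ θ) (h₁ : θ ≤ 1) :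
    ⌈x + θ⌉ - ⌈x⌉ = 0 ∨ ⌈x + θ⌉ - ⌈x⌉ = 1 := by
  have hlo : ⌈x⌉ ≤ ⌈x + θ⌉ := Int.ceil_mono (by linarith)
  have hhi : ⌈x + θ⌉ ≤ ⌈x⌉ + 1 := by
    rw [← Int.ceil_add_one]; exact Int.ceil_mono (by linarith)
  omega

namespace IsSturmian

variable {θ : ℝ} {s : ℕ → ℤ}

theorem eq_zero_or_eq_one (h : IsSturmian θ s) {n : ℕ} (hn : 1 ≤ n) : s n = 0 ∨ s n = 1 := by
  obtain ⟨-, ⟨hθ₀, hθ₁⟩, ρ, hfloor | hceil⟩ := h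
  · rw [hfloor n hn, show ((n : ℝ) + 1) * θ + ρ = (n * θ + ρ) + θ by ring]
    exact Int.floor_add_sub_floor_eq_zero_or_eq_one hθ₀.le hθ₁.le
  · rw [hceil n hn, show ((n : ℝ) + 1) * θ + ρ = (n * θ + ρ) + θ by ring]
    exact Int.ceil_add_sub_ceil_eq_zero_or_eq_one hθ₀.le hθ₁.le

theorem shf (h : IsSturmian θ s) : IsSturmian θ (Shf s) := by
  obtain ⟨hirr, hθ, ρ, hfloor | hceil⟩ := h
  · refine ⟨hirr, hθ, ρ + θ, Or.inl fun n _ => ?_⟩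
    simp only [Shf, hfloor (n + 1) (by omega)]
    push_cast
    ring_nf
  · refine ⟨hirr, hθ, ρ + θ, Or.inr fun n _ => ?_⟩
    simp only [Shf, hceil (n + 1) (by omega)]
    push_cast
    ring_nf

theorem not_const (h : IsSturmian θ s) : ¬ ∀ n, 1 ≤ n → s n = s 1 := by
  obtain ⟨hirr, -, ρ, hfloor | hceil⟩ := h
  · refine not_const_of_eq_sub_of_abs_sub_le hirr
      (f := fun n => ⌊(n : ℝ) * θ + ρ⌋) (ρ := ρ)
      (fun n => abs_le.mpr ⟨?_, ?_⟩) fun n hn => by simp only [hfloor n hn]; push_cast; rfl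
    · linarith [Int.lt_floor_add_one ((n : ℝ) * θ + ρ)]
    · linarith [Int.floor_le ((n : ℝ) * θ + ρ)]
  · refine not_const_of_eq_sub_of_abs_sub_le hirr
      (f := fun n => ⌈(n : ℝ) * θ + ρ⌉) (ρ := ρ)
      (fun n => abs_le.mpr ⟨?_, ?_⟩) fun n hn => by simp only [hceil n hn]; push_cast; rfl
    · linarith [Int.le_ceil ((n : ℝ) * θ + ρ)]
    · linarith [Int.ceil_lt_add_one ((n : ℝ) * θ + ρ)]

end IsSturmian

namespace MemS

variable {v : ℕ → ℤ}

theorem exists_eqW_prepend_succ (hv : MemS v) :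
    ∃ a l s θ, (a = (0 : ℤ) ∨ a = 1) ∧ IsSturmian θ s ∧
      EqW v (Prepend a (l + 1) s) := by
  obtain ⟨a, l, s, θ, ha, hs, hvs⟩ := hv
  cases l with
  | succ l => exact ⟨a, l, s, θ, ha, hs, hvs⟩
  | zero =>
    have hv_eq : EqW v s := hvs.trans fun n hn => prepend_add a 0 s hn
    exact ⟨s 1, 0, Shf s, θ, hs.eq_zero_or_eq_one le_rfl, hs.shf,
      hv_eq.trans (eqW_prepend_one_shf s)⟩

theorem not_const (hv : MemS v) : ¬ ∀ n, 1 ≤ n → v n = v 1 := by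
  obtain ⟨a, l, s, θ, -, hs, hvs⟩ := hv
  refine fun hconst => hs.not_const fun n hn => ?_
  rw [← prepend_add a l s hn, ← prepend_add a l s le_rfl, ← hvs _ (by omega),
    ← hvs _ (by omega), hconst _ (by omega), hconst (1 + l) (by omega)]

end MemS

theorem stmt10 (w : ℕ → ℤ) :
    (MemD w ↔ ((∃ v, MemS v ∧ EqW w (Dbl v)) ∨ (∃ v, MemS v ∧ EqW w (Shf (Dbl v))))) ∧
    ¬ ((∃ v, MemS v ∧ EqW w (Dbl v)) ∧ (∃ v, MemS v ∧ EqW w (Shf (Dbl v)))) := by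
  refine ⟨⟨?_, ?_⟩, ?_⟩
  · rintro ⟨a, l, s, θ, ha, hs, hw⟩
    obtain ⟨m, rfl | rfl⟩ := Nat.even_or_odd' l
    · exact Or.inl ⟨Prepend a m s, ⟨a, m, s, θ, ha, hs, EqW.refl _⟩,
        dbl_prepend a m s ▸ hw⟩
    · exact Or.inr ⟨Prepend a (m + 1) s, ⟨a, m + 1, s, θ, ha, hs, EqW.refl _⟩,
        shf_dbl_prepend_succ a m s ▸ hw⟩
  · rintro (⟨v, hv, hw⟩ | ⟨v, hv, hw⟩)
    · obtain ⟨a, l, s, θ, ha, hs, hvs⟩ := hv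
      exact ⟨a, 2 * l, s, θ, ha, hs, dbl_prepend a l s ▸ hw.trans hvs.dbl⟩
    · obtain ⟨a, l, s, θ, ha, hs, hvs⟩ := hv.exists_eqW_prepend_succ
      exact ⟨a, 2 * l + 1, s, θ, ha, hs, shf_dbl_prepend_succ a l s ▸ hw.trans hvs.dbl.shf⟩
  · rintro ⟨⟨v, hv, hw⟩, ⟨v', -, hw'⟩⟩
    exact hv.not_const (eq_one_of_eqW_dbl_shf_dbl (hw.symm.trans hw'))
end

section
/- For any 0 < r < 1, any letter a ∈ {0,1}, and any infinite binary sequence u: t_{−r}(Du) = −(r^{−1} − 1)·t_{r²}(u) and t_{−r}(a·Du) = −a·r + (1−r)·t_{r²}(u), where D doubles each letter. -/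
/-!
Pairing the terms of `t_{-r}(Du)` at positions `2k+1` and `2k+2`, both carrying the letter
`u_{k+1}`, gives `u_{k+1} ((-r)^{2k+1} + r^{2k+2}) = (1 - r⁻¹) u_{k+1} (r²)^{k+1}`.
Prepending a letter `a` to a word `w` multiplies `t_x(w)` by `x` and adds `a x`.
-/

theorem summable_tval_of_abs_le {x : ℝ} (hx : |x| < 1) {s : ℕ → ℤ} {C : ℝ}
    (hs : ∀ i, |(s i : ℝ)| ≤ C) :
    Summable (fun i : ℕ => (s (i+1) : ℝ) * x^(i+1)) := by
  refine Summable.of_norm_bounded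
    (((summable_geometric_of_abs_lt_one hx).norm.mul_left C).comp_injective (add_left_injective 1))
    (fun i => ?_)
  simp only [Function.comp_apply, norm_mul, norm_pow, Real.norm_eq_abs]
  exact mul_le_mul_of_nonneg_right (hs _) (pow_nonneg (abs_nonneg x) _)

theorem neg_pow_two_mul_add_one (r : ℝ) (k : ℕ) :
    (-r)^(2*k+1) = -r⁻¹ * (r^2)^(k+1) := by
  rcases eq_or_ne r 0 with rfl | hr
  · simp
  · rw [Odd.neg_pow ⟨k, rfl⟩]
    field_simp
    ring

theorem tval_dbl (r : ℝ) {u : ℕ → ℤ}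
    (hu : Summable (fun i : ℕ => (u (i+1) : ℝ) * (r^2)^(i+1))) :
    tval (-r) (Dbl u) = -(r⁻¹ - 1) * tval (r^2) u := by
  set f : ℕ → ℝ := fun i => (Dbl u (i+1) : ℝ) * (-r)^(i+1)
  have hf_even : ∀ k, f (2*k) = -r⁻¹ * ((u (k+1) : ℝ) * (r^2)^(k+1)) := fun k => by
    have hidx : (2*k+1+1)/2 = k+1 := by omega
    simp only [f, Dbl, hidx, neg_pow_two_mul_add_one]
    ring
  have hf_odd : ∀ k, f (2*k+1) = (u (k+1) : ℝ) * (r^2)^(k+1) := fun k => by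
    have hidx : (2*(k+1)+1)/2 = k+1 := by omega
    simp only [f, Dbl, show 2*k+1+1 = 2*(k+1) by ring, hidx, pow_mul, neg_sq]
  have hsum_even : Summable (fun k => f (2*k)) := by
    simpa only [hf_even] using hu.mul_left (-r⁻¹)
  have hsum_odd : Summable (fun k => f (2*k+1)) := by
    simpa only [hf_odd] using hu
  calc tval (-r) (Dbl u) = ∑' k, f (2*k) + ∑' k, f (2*k+1) :=
        (tsum_even_add_odd hsum_even hsum_odd).symm
    _ = -r⁻¹ * tval (r^2) u + tval (r^2) u := by
        rw [tsum_congr hf_even, tsum_congr hf_odd, tsum_mul_left, tval]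
    _ = -(r⁻¹ - 1) * tval (r^2) u := by ring

theorem tval_prepend_one (a : ℤ) (x : ℝ) {s : ℕ → ℤ}
    (hs : Summable (fun i : ℕ => (s (i+1) : ℝ) * x^(i+1))) :
    tval x (Prepend a 1 s) = a * x + x * tval x s := by
  have hterm : ∀ i : ℕ,
      (Prepend a 1 s (i+1+1) : ℝ) * x^(i+1+1) = x * ((s (i+1) : ℝ) * x^(i+1)) :=
    fun i => by rw [Prepend, if_neg (by omega), Nat.add_sub_cancel]; ring
  have htail : Summable (fun i : ℕ => (Prepend a 1 s (i+1+1) : ℝ) * x^(i+1+1)) :=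
    (hs.mul_left x).congr fun i => (hterm i).symm
  rw [tval, tsum_eq_zero_add' (f := fun i => (Prepend a 1 s (i+1) : ℝ) * x^(i+1)) htail,
    tsum_congr hterm, tsum_mul_left, tval]
  simp [Prepend]

theorem stmt14_general (r : ℝ) (h0 : 0 < r) (h1 : r < 1) (a : ℤ)
    (u : ℕ → ℤ) (hu : IsBinary u) :
    tval (-r) (Dbl u) = -(r⁻¹ - 1) * tval (r^2) u ∧
    tval (-r) (Prepend a 1 (Dbl u)) = -(a:ℝ) * r + (1 - r) * tval (r^2) u := by
  have hu_le : ∀ i, |(u i : ℝ)| ≤ 1 := fun i => by rcases hu i with h | h <;> simp [h]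
  have hr : |r| < 1 := abs_lt.mpr ⟨by linarith, h1⟩
  have hr2 : |r^2| < 1 := by rw [abs_pow]; exact pow_lt_one₀ (abs_nonneg r) hr two_ne_zero
  have hdbl := tval_dbl r (summable_tval_of_abs_le hr2 hu_le)
  refine ⟨hdbl, ?_⟩
  have hdbl_summable : Summable (fun i : ℕ => (Dbl u (i+1) : ℝ) * (-r)^(i+1)) :=
    summable_tval_of_abs_le (by rwa [abs_neg]) (fun i => hu_le _)
  rw [tval_prepend_one a (-r) hdbl_summable, hdbl]
  field_simp

theorem stmt14 (r : ℝ) (h0 : 0 < r) (h1 : r < 1) (a : ℤ) (ha : a = 0 ∨ a = 1)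
    (u : ℕ → ℤ) (hu : IsBinary u) :
    tval (-r) (Dbl u) = -(r⁻¹ - 1) * tval (r^2) u ∧
    tval (-r) (Prepend a 1 (Dbl u)) = -(a:ℝ) * r + (1 - r) * tval (r^2) u :=
  stmt14_general r h0 h1 a u hu
end

section
/- Let 0 < r < 1 and w ∈ 𝒫 = D({0,1}^ℕ) ∪ T(D({0,1}^ℕ)). If w ≼_alt 1^∞ then t_{−r}(w) ≤ t_{−r}(1^∞) = −r/(1+r), with equality iff w = 1^∞. If 0^∞ ≼_alt w then t_{−r}(w) ≥ 0, with equality iff w = 0^∞. -/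
/-!
Write `v` for the difference word `1 - w` in the first claim and for `w` itself in the second;
then `t_{-r}(w)` differs from the claimed bound by `t_{-r}(v)`, and the hypothesis says that `v`
is a `{0,1}`-word that vanishes or whose first `1` sits at an even position. Words of `𝒫` have
their letters in blocks of two (positions `2k-1, 2k` for `D`, positions `2k, 2k+1` for `T ∘ D`),
and so does `v`. In the first case a first `1` at an even position `2k` would force a `1` at
`2k-1`, so `v = 0^∞`. In the second case `v₁ = 0`, and grouping the series by blocks gives
`t_{-r}(v) = ∑_{k ≥ 1} v_{2k} (r^{2k} - r^{2k+1})`, a series of nonnegative terms that vanishes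
only when `v = 0^∞`.
-/

def IsDoubled (v : ℕ → ℤ) : Prop := ∀ k, v (2 * k + 1) = v (2 * k + 2)

def IsShiftDoubled (v : ℕ → ℤ) : Prop := ∀ k, v (2 * k + 2) = v (2 * k + 3)

lemma IsDoubled.comp {v : ℕ → ℤ} (hv : IsDoubled v) (f : ℤ → ℤ) : IsDoubled (f ∘ v) :=
  fun k => congrArg f (hv k)

lemma IsShiftDoubled.comp {v : ℕ → ℤ} (hv : IsShiftDoubled v) (f : ℤ → ℤ) :
    IsShiftDoubled (f ∘ v) :=
  fun k => congrArg f (hv k)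

namespace MemP

variable {w : ℕ → ℤ}

lemma letter_eq_zero_or_one (hw : MemP w) : ∀ i, 1 ≤ i → w i = 0 ∨ w i = 1 := by
  intro i hi
  rcases hw with ⟨u, hu, hwu⟩ | ⟨u, hu, hwu⟩ <;> rw [hwu i hi] <;> exact hu _

lemma isDoubled_or_isShiftDoubled (hw : MemP w) : IsDoubled w ∨ IsShiftDoubled w := by
  rcases hw with ⟨u, -, hwu⟩ | ⟨u, -, hwu⟩
  · refine Or.inl fun k => ?_
    rw [hwu _ (by omega), hwu _ (by omega)]
    exact congrArg u (by omega)
  · refine Or.inr fun k => ?_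
    rw [hwu _ (by omega), hwu _ (by omega)]
    exact congrArg u (by omega)

end MemP

lemma AltLe.zero_sub {s s' : ℕ → ℤ} (h : AltLe s s') :
    AltLe (fun _ => 0) (fun n => s' n - s n) := by
  rcases h with ⟨n, hn, hpre, hn'⟩ | heq
  · exact Or.inl ⟨n, hn, fun i hi hin => by simp [hpre i hi hin], by simpa using hn'⟩
  · exact Or.inr fun i hi => by simp [heq i hi]

section BinaryWord

variable {v : ℕ → ℤ} (hv : ∀ i, 1 ≤ i → v i = 0 ∨ v i = 1)
include hv

lemma AltLt.exists_first_one_even (h : AltLt (fun _ => 0) v) :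
    ∃ k, (∀ i, 1 ≤ i → i < 2 * k + 2 → v i = 0) ∧ v (2 * k + 2) = 1 := by
  obtain ⟨n, hn, hpre, hsign⟩ := h
  rcases Nat.even_or_odd n with ⟨k, rfl⟩ | ⟨k, rfl⟩
  · refine ⟨k - 1, fun i hi hik => (hpre i hi (by omega)).symm, ?_⟩
    rw [Even.neg_one_pow ⟨k, rfl⟩, one_mul, sub_zero] at hsign
    rw [show 2 * (k - 1) + 2 = k + k by omega, hsign]
  · rw [Odd.neg_one_pow ⟨k, rfl⟩, neg_one_mul, sub_zero] at hsign
    rcases hv (2 * k + 1) (by omega) with h | h <;> omega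

lemma IsDoubled.eqW_zero_of_zero_altLe (hD : IsDoubled v) (h : AltLe (fun _ => 0) v) :
    EqW v (fun _ => 0) := by
  rcases h with hlt | heq
  · obtain ⟨k, hpre, hk⟩ := AltLt.exists_first_one_even hv hlt
    have := hpre (2 * k + 1) (by omega) (by omega)
    rw [hD k] at this
    omega
  · exact fun i hi => (heq i hi).symm

lemma first_letter_eq_zero_of_zero_altLe (h : AltLe (fun _ => 0) v) : v 1 = 0 := by
  rcases h with hlt | heq
  · obtain ⟨k, hpre, -⟩ := AltLt.exists_first_one_even hv hlt
    exact hpre 1 le_rfl (by omega)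
  · exact (heq 1 le_rfl).symm

end BinaryWord

lemma IsShiftDoubled.eqW_zero_iff {v : ℕ → ℤ} (hT : IsShiftDoubled v) (h1 : v 1 = 0) :
    EqW v (fun _ => 0) ↔ ∀ k, v (2 * k + 2) = 0 := by
  refine ⟨fun h k => h _ (by omega), fun h i hi => ?_⟩
  obtain ⟨k, rfl | rfl⟩ : ∃ k, i = 2 * k + 1 ∨ i = 2 * k + 2 := ⟨(i - 1) / 2, by omega⟩
  · rcases k with _ | k
    · exact h1
    · rw [show 2 * (k + 1) + 1 = 2 * k + 3 by ring, ← hT k, h k]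
  · exact h k

lemma abs_le_one_of_eq_zero_or_one {a : ℤ} (h : a = 0 ∨ a = 1) : |a| ≤ 1 := by
  rcases h with rfl | rfl <;> norm_num

lemma tval_congr {x : ℝ} {s s' : ℕ → ℤ} (h : EqW s s') : tval x s = tval x s' :=
  tsum_congr fun i => by rw [h (i + 1) (by omega)]

lemma tval_const_zero (x : ℝ) : tval x (fun _ => 0) = 0 := by
  simp [tval]

lemma tval_const_one {x : ℝ} (hx : ‖x‖ < 1) : tval x (fun _ => 1) = x / (1 - x) := by
  rw [tval, div_eq_mul_inv, ← tsum_geometric_of_norm_lt_one hx, ← tsum_mul_left]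
  simp [pow_succ, mul_comm]

lemma summable_tval {x : ℝ} (hx : ‖x‖ < 1) {s : ℕ → ℤ} (hs : ∀ i, 1 ≤ i → |s i| ≤ 1) :
    Summable fun i : ℕ => (s (i + 1) : ℝ) * x ^ (i + 1) := by
  refine Summable.of_norm_bounded ((summable_geometric_of_lt_one (norm_nonneg x) hx).mul_left ‖x‖)
    fun i => ?_
  rw [norm_mul, norm_pow, pow_succ', Real.norm_eq_abs, ← Int.cast_abs]
  have : ((|s (i + 1)| : ℤ) : ℝ) ≤ 1 := by exact_mod_cast hs (i + 1) (by omega)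
  exact mul_le_of_le_one_left (by positivity) this

lemma tval_sub {x : ℝ} (hx : ‖x‖ < 1) {s s' : ℕ → ℤ} (hs : ∀ i, 1 ≤ i → |s i| ≤ 1)
    (hs' : ∀ i, 1 ≤ i → |s' i| ≤ 1) :
    tval x s - tval x s' = tval x (fun n => s n - s' n) := by
  rw [tval, tval, tval, ← (summable_tval hx hs).tsum_sub (summable_tval hx hs')]
  push_cast
  simp only [sub_mul]

lemma hasSum_pairs {f : ℕ → ℝ} (hf : Summable f) :
    HasSum (fun k => f (2 * k) + f (2 * k + 1)) (∑' i, f i) := by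
  have he := hf.comp_injective (f := f) (i := fun k => 2 * k) fun a b h => by simpa using h
  have ho := hf.comp_injective (f := f) (i := fun k => 2 * k + 1) fun a b h => by simpa using h
  rw [← tsum_even_add_odd he ho]
  exact he.hasSum.add ho.hasSum

lemma IsShiftDoubled.hasSum_tval {x : ℝ} (hx : ‖x‖ < 1) {v : ℕ → ℤ}
    (hv : ∀ i, 1 ≤ i → |v i| ≤ 1) (hT : IsShiftDoubled v) (h1 : v 1 = 0) :
    HasSum (fun k => (v (2 * k + 2) : ℝ) * (x ^ (2 * k + 2) + x ^ (2 * k + 3))) (tval x v) := by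
  have hs := summable_tval hx hv
  rw [tval, hs.tsum_eq_zero_add, h1, Int.cast_zero, zero_mul, zero_add]
  convert hasSum_pairs ((summable_nat_add_iff 1).mpr hs) using 2 with k
  rw [hT k]
  ring_nf

theorem zero_le_tval_neg_and_eq_zero_iff {r : ℝ} (h0 : 0 < r) (h1 : r < 1) {v : ℕ → ℤ}
    (hv : ∀ i, 1 ≤ i → v i = 0 ∨ v i = 1) (hP : IsDoubled v ∨ IsShiftDoubled v)
    (h : AltLe (fun _ => 0) v) :
    0 ≤ tval (-r) v ∧ (tval (-r) v = 0 ↔ EqW v (fun _ => 0)) := by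
  rcases hP with hD | hT
  · have hv0 := hD.eqW_zero_of_zero_altLe hv h
    rw [tval_congr hv0, tval_const_zero]
    exact ⟨le_rfl, iff_of_true rfl hv0⟩
  have hx : ‖-r‖ < 1 := by rwa [norm_neg, Real.norm_of_nonneg h0.le]
  have hv1 := first_letter_eq_zero_of_zero_altLe hv h
  have hsum := hT.hasSum_tval hx (fun i hi => abs_le_one_of_eq_zero_or_one (hv i hi)) hv1
  have hterm : ∀ k, (v (2 * k + 2) : ℝ) * ((-r) ^ (2 * k + 2) + (-r) ^ (2 * k + 3))
      = v (2 * k + 2) * (r ^ (2 * k + 2) * (1 - r)) := fun k => by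
    rw [Even.neg_pow ⟨k + 1, by ring⟩, Odd.neg_pow ⟨k + 1, by ring⟩]
    ring
  simp only [hterm] at hsum
  have hfactor : ∀ k, 0 < r ^ (2 * k + 2) * (1 - r) :=
    fun k => mul_pos (pow_pos h0 _) (by linarith)
  have hnonneg : ∀ k, 0 ≤ (v (2 * k + 2) : ℝ) * (r ^ (2 * k + 2) * (1 - r)) := fun k => by
    rcases hv (2 * k + 2) (by omega) with h | h <;> simp [h, (hfactor k).le]
  refine ⟨hsum.nonneg hnonneg, ?_⟩
  rw [hT.eqW_zero_iff hv1]
  constructor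
  · intro h0sum k
    have := congrFun ((hasSum_zero_iff_of_nonneg hnonneg).mp (h0sum ▸ hsum)) k
    simpa [(hfactor k).ne'] using this
  · intro hzero
    refine hsum.unique ?_
    simp only [hzero, Int.cast_zero, zero_mul]
    exact hasSum_zero

theorem stmt15 (r : ℝ) (h0 : 0 < r) (h1 : r < 1) (w : ℕ → ℤ) (hw : MemP w) :
    (AltLe w (fun _ => (1:ℤ)) →
      tval (-r) w ≤ -r/(1+r) ∧ tval (-r) (fun _ => (1:ℤ)) = -r/(1+r) ∧
      (tval (-r) w = -r/(1+r) ↔ EqW w (fun _ => (1:ℤ)))) ∧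
    (AltLe (fun _ => (0:ℤ)) w →
      0 ≤ tval (-r) w ∧ (tval (-r) w = 0 ↔ EqW w (fun _ => (0:ℤ)))) := by
  have hbin := hw.letter_eq_zero_or_one
  refine ⟨fun h => ?_, zero_le_tval_neg_and_eq_zero_iff h0 h1 hbin hw.isDoubled_or_isShiftDoubled⟩
  have hx : ‖-r‖ < 1 := by rwa [norm_neg, Real.norm_of_nonneg h0.le]
  have hone : tval (-r) (fun _ => 1) = -r / (1 + r) := by rw [tval_const_one hx, sub_neg_eq_add]
  have hcompl := zero_le_tval_neg_and_eq_zero_iff h0 h1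
    (fun i hi => by have := hbin i hi; omega)
    (hw.isDoubled_or_isShiftDoubled.imp (·.comp (1 - ·)) (·.comp (1 - ·))) h.zero_sub
  have hsub := tval_sub hx (s := fun _ => 1) (s' := w) (fun _ _ => le_rfl)
    (fun i hi => abs_le_one_of_eq_zero_or_one (hbin i hi))
  refine ⟨by linarith [hcompl.1], hone, ?_⟩
  rw [← hone, eq_comm, ← sub_eq_zero, hsub, hcompl.2]
  exact ⟨fun h i hi => by linarith [h i hi], fun h i hi => by simp [h i hi]⟩
end
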